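/- arXiv:2208.09576 — 9 statements merged into one kernel-verified Lean document; each statement's English description precedes it below -/
import Mathlib

section
/- For non-negative integers d and k, the number of binary words of length d (functions from Fin d to Bool) that contain at most k zeros equals the sum over i from 0 to k of the binomial coefficient C(d, i). Consequently, the egg-drop number for Standard Eggs — the height of the tallest building whose egg strength can be determined starting with k eggs and using at most d drops, which is one less than this number of words — equals the sum over i from 1 to k of C(d, i). -/
def words_equiv (d k : ℕ) :
    {w : Fin d → Bool // (Finset.univ.filter (fun i => w i = false)).card ≤ k}
      ≃ {s : Finset (Fin d) // s.card ≤ k} where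
  toFun w := ⟨Finset.univ.filter (fun i => w.1 i = false), w.2⟩
  invFun s := ⟨fun i => decide (i ∉ s.1), by
    have : (Finset.univ.filter (fun i => (decide (i ∉ s.1)) = false)) = s.1 := by
      ext i; simp
    rw [this]; exact s.2⟩
  left_inv w := by
    ext i
    by_cases h : w.1 i = false <;> simp [h]
  right_inv s := by
    ext i; simp

lemma count_sets (d k : ℕ) :
    Nat.card {s : Finset (Fin d) // s.card ≤ k}
      = ∑ i ∈ Finset.range (k + 1), d.choose i := by
  rw [Nat.card_eq_fintype_card, Fintype.card_subtype]
  rw [Finset.card_eq_sum_card_fiberwise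
    (f := fun s : Finset (Fin d) => s.card) (t := Finset.range (k + 1))
    (fun s hs => by simp at hs ⊢; omega)]
  refine Finset.sum_congr rfl fun i hi => ?_
  rw [Finset.filter_filter]
  have h2 : (Finset.univ.filter fun s : Finset (Fin d) => s.card ≤ k ∧ s.card = i)
      = Finset.univ.filter fun s : Finset (Fin d) => s.card = i := by
    ext s; simp at hi ⊢; omega
  rw [h2]
  have := Fintype.card_subtype (fun s : Finset (Fin d) => s.card = i)
  rw [← this, Fintype.card_finset_len, Fintype.card_fin]

/-- The number of binary words of length `d` with at most `k` zeros
equals `∑_{i=0}^{k} C(d,i)`; consequently the Standard-Eggs egg-drop number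
(one less than this count) equals `∑_{i=1}^{k} C(d,i)`. -/
theorem standard_eggs_count (d k : ℕ) :
    Nat.card {w : Fin d → Bool //
        (Finset.univ.filter (fun i => w i = false)).card ≤ k}
      = ∑ i ∈ Finset.range (k + 1), d.choose i ∧
    Nat.card {w : Fin d → Bool //
        (Finset.univ.filter (fun i => w i = false)).card ≤ k} - 1
      = ∑ i ∈ Finset.Icc 1 k, d.choose i := by
  have h2 : (∑ i ∈ Finset.range (k + 1), d.choose i) - 1
      = ∑ i ∈ Finset.Icc 1 k, d.choose i := by
    have hr : Finset.range (k + 1) = insert 0 (Finset.Icc 1 k) := by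
      ext j; simp; omega
    rw [hr, Finset.sum_insert (by simp), Nat.choose_zero_right]
    omega
  have hmain : Nat.card {w : Fin d → Bool //
        (Finset.univ.filter (fun i => w i = false)).card ≤ k}
      = ∑ i ∈ Finset.range (k + 1), d.choose i := by
    rw [Nat.card_congr (words_equiv d k), count_sets]
  exact ⟨hmain, (congrArg (fun n => n - 1) hmain).trans h2⟩
end

section
/- Let k ≥ 1 and let F : ℕ → ℕ satisfy the k-bonacci conditions: F(ℓ) = 0 for 0 ≤ ℓ < k−1, F(k−1) = 1, and F(ℓ) = ∑_{i=1}^{k} F(ℓ−i) for all ℓ ≥ k. Then for every d ≥ 0, the partial sum ∑_{i=0}^{d+k−1} F(i) equals ∑_{i=0}^{⌊d/(k+1)⌋} (−1)^i · C(d − i·k, i) · 2^{d − i(k+1)} (an alternating sum of integers, which is non-negative). -/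
open Finset

private def kterm (k d i : ℕ) : ℤ :=
  (-1) ^ i * ((d - i * k).choose i : ℤ) * 2 ^ (d - i * (k + 1))

private def kA (k d : ℕ) : ℤ := ∑ i ∈ Finset.range (d / (k + 1) + 1), kterm k d i

private def Spart (k : ℕ) (F : ℕ → ℕ) (d : ℕ) : ℕ := ∑ i ∈ Finset.range (d + k), F i

private lemma kterm_zero (k d i : ℕ) (h : d < i * (k + 1)) (hi : 1 ≤ i) :
    kterm k d i = 0 := by
  have hik : i * (k + 1) = i * k + i := by ring
  have : (d - i * k).choose i = 0 := Nat.choose_eq_zero_of_lt (by omega)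
  simp [kterm, this]

private lemma sum_kterm_extend (k d N : ℕ) (hN : d / (k + 1) + 1 ≤ N) :
    kA k d = ∑ i ∈ Finset.range N, kterm k d i := by
  unfold kA
  apply Finset.sum_subset (Finset.range_subset_range.2 hN)
  intro i hi hni
  simp only [Finset.mem_range, not_lt] at hi hni
  obtain ⟨q, hq⟩ : ∃ q, d / (k + 1) = q := ⟨_, rfl⟩
  rw [hq] at hni
  have h2 : (k + 1) * (d / (k + 1)) + d % (k + 1) = d := Nat.div_add_mod d (k + 1)
  rw [hq] at h2
  have h3 : d % (k + 1) < k + 1 := Nat.mod_lt d (by omega)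
  refine kterm_zero k d i ?_ (by omega)
  calc d < (q + 1) * (k + 1) := by nlinarith [h2, h3]
    _ ≤ i * (k + 1) := Nat.mul_le_mul_right _ (by omega)

private lemma kterm_rec (k e j : ℕ) :
    kterm k (e + k + 1) (j + 1) = 2 * kterm k (e + k) (j + 1) - kterm k e j := by
  have hj1 : (j + 1) * k = j * k + k := by ring
  have hj2 : (j + 1) * (k + 1) = j * (k + 1) + (k + 1) := by ring
  have hj3 : j * (k + 1) = j * k + j := by ring
  rcases lt_trichotomy e (j * (k + 1)) with h | h | h
  · -- all three terms vanish
    have hj : 1 ≤ j := by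
      rcases Nat.eq_zero_or_pos j with rfl | h0
      · simp at h
      · exact h0
    rw [kterm_zero k e j (by omega) hj,
        kterm_zero k (e + k) (j + 1) (by omega) (by omega),
        kterm_zero k (e + k + 1) (j + 1) (by omega) (by omega)]
    ring
  · -- e = j * (k+1)
    have e1 : e + k + 1 - (j + 1) * k = j + 1 := by omega
    have e2 : e + k - (j + 1) * k = j := by omega
    have e3 : e + k + 1 - (j + 1) * (k + 1) = 0 := by omega
    have e4 : e + k - (j + 1) * (k + 1) = 0 := by omega
    have e5 : e - j * k = j := by omega
    have e6 : e - j * (k + 1) = 0 := by omega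
    simp only [kterm, e1, e2, e3, e4, e5, e6, Nat.choose_self,
      Nat.choose_succ_self, pow_succ]
    push_cast
    ring
  · -- clean case : e ≥ j*(k+1) + 1
    have e1 : e + k + 1 - (j + 1) * k = (e - j * k) + 1 := by omega
    have e2 : e + k - (j + 1) * k = e - j * k := by omega
    have e3 : e + k + 1 - (j + 1) * (k + 1) = (e - j * (k + 1) - 1) + 1 := by omega
    have e4 : e + k - (j + 1) * (k + 1) = e - j * (k + 1) - 1 := by omega
    have e5 : e - j * (k + 1) = (e - j * (k + 1) - 1) + 1 := by omega
    simp only [kterm, e1, e2, e3, e4]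
    rw [e5, Nat.choose_succ_succ]
    push_cast
    ring

private lemma sum_kterm_rec (k e N : ℕ) :
    ∑ i ∈ Finset.range (N + 1), kterm k (e + k + 1) i
      = 2 * ∑ i ∈ Finset.range (N + 1), kterm k (e + k) i
        - ∑ j ∈ Finset.range N, kterm k e j := by
  rw [Finset.sum_range_succ' (fun i => kterm k (e + k + 1) i) N,
      Finset.sum_range_succ' (fun i => kterm k (e + k) i) N]
  have h0 : kterm k (e + k + 1) 0 = 2 * kterm k (e + k) 0 := by
    simp [kterm, pow_succ]
    ring
  have hmain : ∑ j ∈ Finset.range N, kterm k (e + k + 1) (j + 1)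
      = 2 * ∑ j ∈ Finset.range N, kterm k (e + k) (j + 1)
        - ∑ j ∈ Finset.range N, kterm k e j := by
    rw [Finset.mul_sum, ← Finset.sum_sub_distrib]
    exact Finset.sum_congr rfl fun j _ => kterm_rec k e j
  rw [hmain, h0]; ring

private lemma kA_rec (k e : ℕ) :
    kA k (e + k + 1) = 2 * kA k (e + k) - kA k e := by
  obtain ⟨q, hq⟩ : ∃ q, e / (k + 1) = q := ⟨_, rfl⟩
  have hd1 : (e + k + 1) / (k + 1) = q + 1 := by
    have h : e + k + 1 = e + (k + 1) := by omega
    rw [h, Nat.add_div_right _ (by omega), hq]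
  have hde : q ≤ e := hq ▸ Nat.div_le_self _ _
  have hdk : (e + k) / (k + 1) ≤ q + 1 := by
    have := Nat.div_le_div_right (c := k + 1) (show e + k ≤ e + k + 1 by omega)
    omega
  obtain ⟨r, hr⟩ : ∃ r, (e + k) / (k + 1) = r := ⟨_, rfl⟩
  rw [hr] at hdk
  rw [sum_kterm_extend k (e + k + 1) (e + 1 + 1) (by rw [hd1]; omega),
      sum_kterm_extend k (e + k) (e + 1 + 1) (by rw [hr]; omega),
      sum_kterm_extend k e (e + 1) (by rw [hq]; omega)]
  exact sum_kterm_rec k e (e + 1)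

private lemma kA_small (k d : ℕ) (h : d ≤ k) : kA k d = 2 ^ d := by
  have : d / (k + 1) = 0 := Nat.div_eq_of_lt (by omega)
  simp [kA, this, kterm]

private lemma Spart_eq_kA (k : ℕ) (hk : 1 ≤ k) (F : ℕ → ℕ)
    (h0 : ∀ ℓ, ℓ < k - 1 → F ℓ = 0) (h1 : F (k - 1) = 1)
    (hrec : ∀ ℓ, k ≤ ℓ → F ℓ = ∑ i ∈ Finset.Icc 1 k, F (ℓ - i)) :
    ∀ d, ((Spart k F d : ℕ) : ℤ) = kA k d := by
  have hpre : ∀ d, d < k → ∑ i ∈ Finset.range d, F i = 0 := by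
    intro d hd
    refine Finset.sum_eq_zero fun i hi => h0 i ?_
    simp only [Finset.mem_range] at hi; omega
  have hS0 : Spart k F 0 = 1 := by
    have hkk : k = (k - 1) + 1 := by omega
    show ∑ i ∈ Finset.range (0 + k), F i = 1
    rw [zero_add, hkk, Finset.sum_range_succ, hpre (k - 1) (by omega), h1]
  have hmid : ∀ d, ∑ i ∈ Finset.range (d + k), F i
      = ∑ i ∈ Finset.range d, F i + ∑ i ∈ Finset.range k, F (d + i) := by
    intro d
    have hik : ∑ i ∈ Finset.Ico d (d + k), F i = ∑ i ∈ Finset.range k, F (d + i) := by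
      rw [Finset.sum_Ico_eq_sum_range]
      have hdk : d + k - d = k := by omega
      rw [hdk]
    rw [Finset.range_eq_Ico,
        ← Finset.sum_Ico_consecutive F (Nat.zero_le d) (Nat.le_add_right d k), hik,
        ← Finset.range_eq_Ico]
  have hF : ∀ d, F (d + k) = ∑ i ∈ Finset.range k, F (d + i) := by
    intro d
    rw [hrec (d + k) (by omega), ← Finset.Ico_add_one_right_eq_Icc, Finset.sum_Ico_eq_sum_range]
    have hk1 : k + 1 - 1 = k := by omega
    rw [hk1]
    rw [Finset.sum_congr rfl (fun i hi => by
      simp only [Finset.mem_range] at hi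
      show F (d + k - (1 + i)) = F (d + (k - 1 - i))
      congr 1
      omega)]
    exact Finset.sum_range_reflect (fun i => F (d + i)) k
  have hstep : ∀ d, Spart k F (d + 1) + ∑ i ∈ Finset.range d, F i = 2 * Spart k F d := by
    intro d
    have h1' : Spart k F (d + 1) = Spart k F d + F (d + k) := by
      show ∑ i ∈ Finset.range (d + 1 + k), F i = _
      have hh : d + 1 + k = (d + k) + 1 := by omega
      rw [hh, Finset.sum_range_succ]
      rfl
    have h2' := hmid d
    have h3' : Spart k F d = ∑ i ∈ Finset.range (d + k), F i := rfl
    rw [h1', hF d]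
    omega
  have hsmall : ∀ d, d ≤ k → Spart k F d = 2 ^ d := by
    intro d
    induction d with
    | zero => intro _; simpa using hS0
    | succ n ih =>
      intro hn
      have := hstep n
      rw [hpre n (by omega), ih (by omega)] at this
      rw [pow_succ]
      omega
  have hSrec : ∀ d, k ≤ d → Spart k F (d + 1) + Spart k F (d - k) = 2 * Spart k F d := by
    intro d hd
    have h := hstep d
    have hpr : ∑ i ∈ Finset.range d, F i = Spart k F (d - k) := by
      show _ = ∑ i ∈ Finset.range (d - k + k), F i
      have hdd : d - k + k = d := by omega
      rw [hdd]
    rwa [hpr] at h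
  intro d
  induction d using Nat.strong_induction_on with
  | _ d ih =>
    rcases le_or_gt d k with hd | hd
    · rw [hsmall d hd, kA_small k d hd]; push_cast; ring
    · obtain ⟨e, rfl⟩ : ∃ e, d = e + k + 1 := ⟨d - k - 1, by omega⟩
      have hrec' := hSrec (e + k) (by omega)
      have he : e + k - k = e := by omega
      rw [he] at hrec'
      have ih1 : ((Spart k F (e + k) : ℕ) : ℤ) = kA k (e + k) := ih (e + k) (by omega)
      have ih2 : ((Spart k F e : ℕ) : ℤ) = kA k e := ih e (by omega)
      have hcast : ((Spart k F (e + k + 1) : ℕ) : ℤ) + (Spart k F e : ℕ)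
          = 2 * (Spart k F (e + k) : ℕ) := by exact_mod_cast congrArg (Nat.cast : ℕ → ℤ) hrec'
      rw [kA_rec k e, ← ih1, ← ih2]
      linarith

/-- if `F` satisfies the `k`-bonacci conditions, then for every `d ≥ 0`
the partial sum `∑_{i=0}^{d+k-1} F i` equals the alternating sum
`∑_{i=0}^{⌊d/(k+1)⌋} (-1)^i C(d - i k, i) 2^{d - i(k+1)}` (evaluated in `ℤ`). -/
theorem kbonacci_partial_sum_alternating (k : ℕ) (hk : 1 ≤ k) (F : ℕ → ℕ)
    (h0 : ∀ ℓ, ℓ < k - 1 → F ℓ = 0) (h1 : F (k - 1) = 1)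
    (hrec : ∀ ℓ, k ≤ ℓ → F ℓ = ∑ i ∈ Finset.Icc 1 k, F (ℓ - i)) (d : ℕ) :
    ((∑ i ∈ Finset.range (d + k), F i : ℕ) : ℤ)
      = ∑ i ∈ Finset.range (d / (k + 1) + 1),
          (-1) ^ i * ((d - i * k).choose i : ℤ) * 2 ^ (d - i * (k + 1)) := by
  have := Spart_eq_kA k hk F h0 h1 hrec d
  simpa [Spart, kA, kterm] using this
end

section
/- Let k ≥ 1 and d ≥ 0, and let F : ℕ → ℕ satisfy the k-bonacci conditions: F(ℓ) = 0 for 0 ≤ ℓ < k−1, F(k−1) = 1, and F(ℓ) = ∑_{i=1}^{k} F(ℓ−i) for all ℓ ≥ k. Then the number of Replacement-Eggs outcome words of horizon d — namely binary words w of some length ℓ ≤ d such that either (a) ℓ = d and w does not contain k consecutive 0's, or (b) k ≤ ℓ ≤ d, the last k letters of w are all 0, and the prefix of w of length ℓ − 1 does not contain k consecutive 0's — equals ∑_{i=0}^{d+k−1} F(i). -/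
/-- `w` contains `k` consecutive `0`'s (`false`s). -/
def HasKConsecZeros (k : ℕ) {n : ℕ} (w : Fin n → Bool) : Prop :=
  ∃ j : ℕ, j + k ≤ n ∧ ∀ i : Fin n, j ≤ (i : ℕ) → (i : ℕ) < j + k → w i = false

/-- The prefix of length `m ≤ n` of a word of length `n`. -/
def wordPrefix {n : ℕ} (w : Fin n → Bool) (m : ℕ) (h : m ≤ n) : Fin m → Bool :=
  fun i => w ⟨(i : ℕ), lt_of_lt_of_le i.isLt h⟩

/-- `p = ⟨ℓ, w⟩` is a Replacement-Eggs outcome word of horizon `d` with `k` starting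
eggs: either `ℓ = d` and `w` lacks `k` consecutive zeros, or `k ≤ ℓ ≤ d`, the last
`k` letters of `w` are all `0`, and the prefix of length `ℓ - 1` lacks `k`
consecutive zeros. -/
def ReplacementOutcome (k d : ℕ) (p : Σ ℓ : ℕ, Fin ℓ → Bool) : Prop :=
  (p.1 = d ∧ ¬ HasKConsecZeros k p.2) ∨
  (k ≤ p.1 ∧ p.1 ≤ d ∧
    (∀ i : Fin p.1, p.1 ≤ (i : ℕ) + k → p.2 i = false) ∧
    ¬ HasKConsecZeros k (wordPrefix p.2 (p.1 - 1) (Nat.sub_le _ _)))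

/-- `w ++ 0^a` avoids `k` consecutive zeros: every window of length `k` of the
padded word contains a `true`, necessarily inside `w`. -/
def GoodR (k a : ℕ) {m : ℕ} (w : Fin m → Bool) : Prop :=
  ∀ s : ℕ, s + k ≤ m + a → ∃ i : Fin m, s ≤ (i : ℕ) ∧ (i : ℕ) < s + k ∧ w i = true

lemma not_has_iff_goodR (k : ℕ) {m : ℕ} (w : Fin m → Bool) :
    ¬ HasKConsecZeros k w ↔ GoodR k 0 w := by
  unfold HasKConsecZeros GoodR
  push_neg
  constructor
  · intro h s hs
    obtain ⟨i, h1, h2, h3⟩ := h s (by omega)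
    exact ⟨i, h1, h2, Bool.ne_false_iff.mp h3⟩
  · intro h s hs
    obtain ⟨i, h1, h2, h3⟩ := h s (by omega)
    exact ⟨i, h1, h2, by simp [h3]⟩

lemma goodR_last_true {k a m : ℕ} (ha : a < k) (w : Fin (m+1) → Bool)
    (hc : w (Fin.last m) = true) :
    GoodR k a w ↔ GoodR k 0 (wordPrefix w m (Nat.le_succ m)) := by
  constructor
  · intro h s hs
    obtain ⟨i, h1, h2, h3⟩ := h s (by omega)
    have him : (i : ℕ) < m := by omega
    exact ⟨⟨i, him⟩, h1, h2, h3⟩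
  · intro h s hs
    by_cases hsk : s + k ≤ m
    · obtain ⟨i, h1, h2, h3⟩ := h s (by omega)
      exact ⟨⟨(i : ℕ), by omega⟩, h1, h2, h3⟩
    · refine ⟨Fin.last m, ?_, ?_, hc⟩ <;> simp [Fin.last] <;> omega

lemma goodR_last_false {k a m : ℕ} (w : Fin (m+1) → Bool)
    (hc : w (Fin.last m) = false) :
    GoodR k a w ↔ GoodR k (a+1) (wordPrefix w m (Nat.le_succ m)) := by
  constructor
  · intro h s hs
    obtain ⟨i, h1, h2, h3⟩ := h s (by omega)
    have him : (i : ℕ) < m := by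
      rcases Nat.lt_or_ge (i : ℕ) m with h' | h'
      · exact h'
      · exfalso
        have hi : i = Fin.last m := by
          apply Fin.ext
          have := i.isLt
          simp [Fin.last]
          omega
        rw [hi, hc] at h3
        exact Bool.false_ne_true h3
    exact ⟨⟨(i : ℕ), him⟩, h1, h2, h3⟩
  · intro h s hs
    obtain ⟨i, h1, h2, h3⟩ := h s (by omega)
    exact ⟨⟨(i : ℕ), by omega⟩, h1, h2, h3⟩

lemma goodR_k_false {k m : ℕ} (hk : 1 ≤ k) (u : Fin m → Bool) : ¬ GoodR k k u := by
  intro h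
  obtain ⟨i, h1, _, _⟩ := h m (by omega)
  have := i.isLt
  omega

/-- Appending a fixed letter is a bijection. -/
def snocEquiv (m : ℕ) (p : (Fin m → Bool) → Prop) (c : Bool) :
    {w : Fin (m+1) → Bool // p (wordPrefix w m (Nat.le_succ m)) ∧ w (Fin.last m) = c}
      ≃ {u : Fin m → Bool // p u} where
  toFun w := ⟨wordPrefix w.1 m (Nat.le_succ m), w.2.1⟩
  invFun u := ⟨fun i => if h : (i : ℕ) < m then u.1 ⟨i, h⟩ else c, by
    constructor
    · have : wordPrefix (fun i : Fin (m+1) =>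
          if h : (i : ℕ) < m then u.1 ⟨i, h⟩ else c) m (Nat.le_succ m) = u.1 := by
        funext i
        simp [wordPrefix, i.isLt]
      rw [this]
      exact u.2
    · simp [Fin.last]⟩
  left_inv := by
    rintro ⟨w, hw, hc⟩
    apply Subtype.ext
    funext i
    by_cases h : (i : ℕ) < m
    · simp only [dif_pos h]
      rfl
    · have hi : i = Fin.last m := by
        apply Fin.ext
        have := i.isLt
        simp [Fin.last]
        omega
      simp only [dif_neg h]
      rw [hi, hc]
  right_inv := by
    rintro ⟨u, hu⟩
    apply Subtype.ext
    funext i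
    simp [wordPrefix, i.isLt]

lemma card_goodR_zero (k a : ℕ) (ha : a < k) :
    Nat.card {w : Fin 0 → Bool // GoodR k a w} = 1 := by
  have hall : ∀ w : Fin 0 → Bool, GoodR k a w := by
    intro w s hs
    exact absurd hs (by omega)
  rw [Nat.card_congr (Equiv.subtypeUnivEquiv hall), Nat.card_eq_fintype_card]
  simp

lemma card_goodR_succ (k a m : ℕ) (hk : 1 ≤ k) (ha : a < k) :
    Nat.card {w : Fin (m+1) → Bool // GoodR k a w}
      = Nat.card {u : Fin m → Bool // GoodR k 0 u}
        + (if a + 1 < k then Nat.card {u : Fin m → Bool // GoodR k (a+1) u} else 0) := by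
  classical
  have key : ∀ w : Fin (m+1) → Bool, GoodR k a w ↔
      ((GoodR k 0 (wordPrefix w m (Nat.le_succ m)) ∧ w (Fin.last m) = true) ∨
       (GoodR k (a+1) (wordPrefix w m (Nat.le_succ m)) ∧ w (Fin.last m) = false)) := by
    intro w
    cases hc : w (Fin.last m) with
    | true => rw [goodR_last_true ha w hc]; simp [hc]
    | false => rw [goodR_last_false w hc]; simp [hc]
  rw [Nat.card_congr (Equiv.subtypeEquivRight key)]
  have hdisj : Disjoint
      (fun w : Fin (m+1) → Bool =>
        GoodR k 0 (wordPrefix w m (Nat.le_succ m)) ∧ w (Fin.last m) = true)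
      (fun w : Fin (m+1) → Bool =>
        GoodR k (a+1) (wordPrefix w m (Nat.le_succ m)) ∧ w (Fin.last m) = false) := by
    rw [Pi.disjoint_iff]
    intro w
    rw [disjoint_iff_inf_le]
    rintro ⟨⟨-, h1⟩, ⟨-, h2⟩⟩
    rw [h1] at h2
    exact Bool.true_eq_false_eq_False h2
  rw [Nat.card_congr (subtypeOrEquiv _ _ hdisj), Nat.card_sum,
      Nat.card_congr (snocEquiv m (GoodR k 0) true),
      Nat.card_congr (snocEquiv m (GoodR k (a+1)) false)]
  by_cases h1 : a + 1 < k
  · rw [if_pos h1]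
  · rw [if_neg h1]
    have hempty : ∀ u : Fin m → Bool, ¬ GoodR k (a+1) u := by
      have : a + 1 = k := by omega
      rw [this]
      exact goodR_k_false hk
    have : IsEmpty {u : Fin m → Bool // GoodR k (a+1) u} := ⟨fun u => hempty u.1 u.2⟩
    have h2 : Nat.card {u : Fin m → Bool // GoodR k (a+1) u} = 0 := Nat.card_of_isEmpty
    rw [h2]

lemma card_goodR_eq (k : ℕ) (hk : 1 ≤ k) (F : ℕ → ℕ)
    (h0 : ∀ ℓ, ℓ < k - 1 → F ℓ = 0) (h1 : F (k - 1) = 1)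
    (hrec : ∀ ℓ, k ≤ ℓ → F ℓ = ∑ i ∈ Finset.Icc 1 k, F (ℓ - i)) :
    ∀ m a, a < k → Nat.card {w : Fin m → Bool // GoodR k a w}
      = ∑ i ∈ Finset.range (k - a), F (m + k - 1 - i) := by
  have hF : ∀ m : ℕ, F (m + k) = ∑ i ∈ Finset.range k, F (m + k - 1 - i) := by
    intro m
    rw [hrec (m + k) (by omega), ← Finset.Ico_add_one_right_eq_Icc, Finset.sum_Ico_eq_sum_range]
    have hk1 : k + 1 - 1 = k := by omega
    rw [hk1]
    apply Finset.sum_congr rfl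
    intro i hi
    congr 1
    omega
  intro m
  induction m with
  | zero =>
    intro a ha
    rw [card_goodR_zero k a ha]
    rw [Finset.sum_eq_single 0]
    · simpa using h1.symm
    · intro b hb hb0
      apply h0
      simp only [Finset.mem_range] at hb
      omega
    · intro h
      exfalso
      apply h
      simp only [Finset.mem_range]
      omega
  | succ m ih =>
    intro a ha
    rw [card_goodR_succ k a m hk ha, ih 0 hk]
    have hsplit : ∑ i ∈ Finset.range (k - a), F (m + 1 + k - 1 - i)
        = (∑ i ∈ Finset.range (k - a - 1), F (m + k - 1 - i)) + F (m + k) := by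
      have hka : k - a = (k - a - 1) + 1 := by omega
      rw [hka, Finset.sum_range_succ']
      congr 1
      · apply Finset.sum_congr rfl
        intro i hi
        congr 1
        omega
      · congr 1
        omega
    rw [hsplit]
    have e1 : k - 0 = k := by omega
    by_cases h1' : a + 1 < k
    · rw [if_pos h1', ih (a+1) h1']
      have e2 : k - (a + 1) = k - a - 1 := by omega
      rw [e1, e2, ← hF m, add_comm]
    · rw [if_neg h1', add_zero, e1, ← hF m]
      have e3 : k - a - 1 = 0 := by omega
      rw [e3]
      simp

/-- The type-b words of length `ℓ` biject with `GoodR (k-1)` words of length `ℓ - k`. -/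
lemma cardB (k ℓ : ℕ) (hk : 1 ≤ k) (hkℓ : k ≤ ℓ) :
    Nat.card {w : Fin ℓ → Bool //
        (∀ i : Fin ℓ, ℓ ≤ (i : ℕ) + k → w i = false) ∧
        ¬ HasKConsecZeros k (wordPrefix w (ℓ - 1) (Nat.sub_le ℓ 1))}
      = Nat.card {u : Fin (ℓ - k) → Bool // GoodR k (k - 1) u} := by
  apply Nat.card_congr
  refine ⟨fun w => ⟨wordPrefix w.1 (ℓ - k) (Nat.sub_le ℓ k), ?_⟩,
          fun u => ⟨fun i => if h : (i : ℕ) < ℓ - k then u.1 ⟨i, h⟩ else false, ?_, ?_⟩,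
          ?_, ?_⟩
  · obtain ⟨hZ, hG⟩ := w.2
    rw [not_has_iff_goodR] at hG
    intro s hs
    obtain ⟨i, hi1, hi2, hi3⟩ := hG s (by omega)
    simp only [wordPrefix] at hi3
    have him : (i : ℕ) < ℓ - k := by
      by_contra h'
      rw [hZ ⟨(i : ℕ), lt_of_lt_of_le i.isLt (Nat.sub_le ℓ 1)⟩ (by simp; omega)] at hi3
      exact Bool.false_ne_true hi3
    refine ⟨⟨(i : ℕ), him⟩, hi1, hi2, ?_⟩
    simp only [wordPrefix]
    exact hi3
  · intro i hik
    exact dif_neg (by omega)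
  · rw [not_has_iff_goodR]
    intro s hs
    obtain ⟨i, hi1, hi2, hi3⟩ := u.2 s (by omega)
    refine ⟨⟨(i : ℕ), by omega⟩, hi1, hi2, ?_⟩
    simp only [wordPrefix]
    rw [dif_pos i.isLt]
    exact hi3
  · intro w
    apply Subtype.ext
    funext i
    by_cases h : (i : ℕ) < ℓ - k
    · simp only [dif_pos h]
      rfl
    · simp only [dif_neg h]
      exact (w.2.1 i (by omega)).symm
  · intro u
    apply Subtype.ext
    funext i
    simp only [wordPrefix]
    rw [dif_pos i.isLt]

lemma nat_card_sigma {n : ℕ} (f : Fin n → Type*) [inst : ∀ i, Finite (f i)] :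
    Nat.card (Σ i, f i) = ∑ i, Nat.card (f i) := by
  classical
  letI : ∀ i, Fintype (f i) := fun i => Fintype.ofFinite (f i)
  rw [Nat.card_eq_fintype_card, Fintype.card_sigma]
  exact Finset.sum_congr rfl (fun i _ => (Nat.card_eq_fintype_card).symm)

lemma perL (k d ℓ : ℕ) (hk : 1 ≤ k) (hℓ : ℓ ≤ d) (F : ℕ → ℕ)
    (h0 : ∀ ℓ, ℓ < k - 1 → F ℓ = 0) (h1 : F (k - 1) = 1)
    (hrec : ∀ ℓ, k ≤ ℓ → F ℓ = ∑ i ∈ Finset.Icc 1 k, F (ℓ - i)) :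
    Nat.card {w : Fin ℓ → Bool // ReplacementOutcome k d ⟨ℓ, w⟩}
      = (if ℓ = d then ∑ i ∈ Finset.range k, F (d + i) else 0)
        + (if k ≤ ℓ then F (ℓ - 1) else 0) := by
  classical
  have key : ∀ w : Fin ℓ → Bool, ReplacementOutcome k d ⟨ℓ, w⟩ ↔
      ((ℓ = d ∧ ¬ HasKConsecZeros k w) ∨
       ((k ≤ ℓ ∧ (∀ i : Fin ℓ, ℓ ≤ (i : ℕ) + k → w i = false) ∧
         ¬ HasKConsecZeros k (wordPrefix w (ℓ - 1) (Nat.sub_le ℓ 1))))) := by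
    intro w
    unfold ReplacementOutcome
    constructor
    · rintro (⟨ha, hb⟩ | ⟨ha, hb, hc, hd⟩)
      · exact Or.inl ⟨ha, hb⟩
      · exact Or.inr ⟨ha, hc, hd⟩
    · rintro (⟨ha, hb⟩ | ⟨ha, hc, hd⟩)
      · exact Or.inl ⟨ha, hb⟩
      · exact Or.inr ⟨ha, hℓ, hc, hd⟩
  rw [Nat.card_congr (Equiv.subtypeEquivRight key)]
  have hdisj : Disjoint
      (fun w : Fin ℓ → Bool => ℓ = d ∧ ¬ HasKConsecZeros k w)
      (fun w : Fin ℓ → Bool => k ≤ ℓ ∧ (∀ i : Fin ℓ, ℓ ≤ (i : ℕ) + k → w i = false) ∧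
         ¬ HasKConsecZeros k (wordPrefix w (ℓ - 1) (Nat.sub_le ℓ 1))) := by
    rw [Pi.disjoint_iff]
    intro w
    rw [disjoint_iff_inf_le]
    rintro ⟨⟨-, hnh⟩, ⟨hkl, hz, -⟩⟩
    apply hnh
    refine ⟨ℓ - k, by omega, ?_⟩
    intro i hi1 hi2
    exact hz i (by omega)
  rw [Nat.card_congr (subtypeOrEquiv _ _ hdisj), Nat.card_sum]
  congr 1
  · by_cases hd : ℓ = d
    · subst hd
      rw [if_pos rfl]
      have e1 : ∀ w : Fin ℓ → Bool, (ℓ = ℓ ∧ ¬ HasKConsecZeros k w) ↔ GoodR k 0 w := by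
        intro w
        rw [← not_has_iff_goodR]
        simp
      rw [Nat.card_congr (Equiv.subtypeEquivRight e1),
          card_goodR_eq k hk F h0 h1 hrec ℓ 0 hk]
      rw [Nat.sub_zero]
      have : ∀ i ∈ Finset.range k, F (ℓ + k - 1 - i) = F (ℓ + (k - 1 - i)) := by
        intro i hi
        simp only [Finset.mem_range] at hi
        congr 1
        omega
      rw [Finset.sum_congr rfl this]
      exact Finset.sum_range_reflect (fun i => F (ℓ + i)) k
    · rw [if_neg hd]
      have : IsEmpty {w : Fin ℓ → Bool // ℓ = d ∧ ¬ HasKConsecZeros k w} :=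
        ⟨fun w => hd w.2.1⟩
      rw [Nat.card_of_isEmpty]
  · by_cases hkl : k ≤ ℓ
    · rw [if_pos hkl]
      have e2 : ∀ w : Fin ℓ → Bool,
          (k ≤ ℓ ∧ (∀ i : Fin ℓ, ℓ ≤ (i : ℕ) + k → w i = false) ∧
            ¬ HasKConsecZeros k (wordPrefix w (ℓ - 1) (Nat.sub_le ℓ 1))) ↔
          ((∀ i : Fin ℓ, ℓ ≤ (i : ℕ) + k → w i = false) ∧
            ¬ HasKConsecZeros k (wordPrefix w (ℓ - 1) (Nat.sub_le ℓ 1))) := by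
        intro w
        simp [hkl]
      rw [Nat.card_congr (Equiv.subtypeEquivRight e2), cardB k ℓ hk hkl,
          card_goodR_eq k hk F h0 h1 hrec (ℓ - k) (k - 1) (by omega)]
      have hr : k - (k - 1) = 1 := by omega
      rw [hr, Finset.sum_range_one]
      congr 1
      omega
    · rw [if_neg hkl]
      have : IsEmpty {w : Fin ℓ → Bool // k ≤ ℓ ∧ (∀ i : Fin ℓ, ℓ ≤ (i : ℕ) + k → w i = false) ∧
          ¬ HasKConsecZeros k (wordPrefix w (ℓ - 1) (Nat.sub_le ℓ 1))} :=
        ⟨fun w => hkl w.2.1⟩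
      rw [Nat.card_of_isEmpty]

/-- if `F` satisfies the `k`-bonacci conditions, then the number of
Replacement-Eggs outcome words of horizon `d` equals `∑_{i=0}^{d+k-1} F i`. -/
theorem replacement_eggs_count_kbonacci (k : ℕ) (hk : 1 ≤ k) (d : ℕ) (F : ℕ → ℕ)
    (h0 : ∀ ℓ, ℓ < k - 1 → F ℓ = 0) (h1 : F (k - 1) = 1)
    (hrec : ∀ ℓ, k ≤ ℓ → F ℓ = ∑ i ∈ Finset.Icc 1 k, F (ℓ - i)) :
    Nat.card {p : Σ ℓ : ℕ, Fin ℓ → Bool // ReplacementOutcome k d p}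
      = ∑ i ∈ Finset.range (d + k), F i := by
  classical
  have hle : ∀ p : Σ ℓ : ℕ, Fin ℓ → Bool, ReplacementOutcome k d p → p.1 ≤ d := by
    rintro p (⟨h, -⟩ | ⟨-, h, -⟩) <;> omega
  let e : {p : Σ ℓ : ℕ, Fin ℓ → Bool // ReplacementOutcome k d p}
      ≃ Σ ℓ : Fin (d+1), {w : Fin (ℓ : ℕ) → Bool // ReplacementOutcome k d ⟨(ℓ : ℕ), w⟩} :=
    ⟨fun p => ⟨⟨p.1.1, Nat.lt_succ_of_le (hle p.1 p.2)⟩, p.1.2, p.2⟩,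
     fun q => ⟨⟨(q.1 : ℕ), q.2.1⟩, q.2.2⟩, fun p => rfl, fun q => rfl⟩
  rw [Nat.card_congr e, nat_card_sigma,
      Fin.sum_univ_eq_sum_range
        (fun ℓ => Nat.card {w : Fin ℓ → Bool // ReplacementOutcome k d ⟨ℓ, w⟩}) (d+1)]
  have hsum : ∑ ℓ ∈ Finset.range (d+1),
      Nat.card {w : Fin ℓ → Bool // ReplacementOutcome k d ⟨ℓ, w⟩}
    = ∑ ℓ ∈ Finset.range (d+1),
      ((if ℓ = d then ∑ i ∈ Finset.range k, F (d + i) else 0)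
        + (if k ≤ ℓ then F (ℓ - 1) else 0)) := by
    apply Finset.sum_congr rfl
    intro ℓ hℓ
    simp only [Finset.mem_range] at hℓ
    exact perL k d ℓ hk (by omega) F h0 h1 hrec
  rw [hsum, Finset.sum_add_distrib, Finset.sum_ite_eq' (Finset.range (d+1)) d,
      if_pos (by simp : d ∈ Finset.range (d+1))]
  have hfil : ∑ ℓ ∈ Finset.range (d+1), (if k ≤ ℓ then F (ℓ - 1) else 0)
      = ∑ ℓ ∈ Finset.Icc k d, F (ℓ - 1) := by
    rw [← Finset.sum_filter]
    apply Finset.sum_congr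
    · ext x
      simp only [Finset.mem_filter, Finset.mem_range, Finset.mem_Icc]
      omega
    · intros; rfl
  rw [hfil]
  -- now pure arithmetic with sums of F
  have eA : ∑ j ∈ Finset.Ico d (d + k), F j = ∑ i ∈ Finset.range k, F (d + i) := by
    rw [Finset.sum_Ico_eq_sum_range, show d + k - d = k from by omega]
  have eB : ∑ ℓ ∈ Finset.Icc k d, F (ℓ - 1) = ∑ j ∈ Finset.Ico (k - 1) d, F j := by
    rw [← Finset.Ico_add_one_right_eq_Icc, Finset.sum_Ico_eq_sum_range, Finset.sum_Ico_eq_sum_range]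
    have hsz : d + 1 - k = d - (k - 1) := by omega
    rw [hsz]
    apply Finset.sum_congr rfl
    intro i hi
    congr 1
    omega
  have splitRange : ∑ i ∈ Finset.range (d + k), F i
      = ∑ i ∈ Finset.Ico (k - 1) (d + k), F i := by
    rw [Finset.range_eq_Ico,
        ← Finset.sum_Ico_consecutive F (Nat.zero_le (k - 1)) (by omega : k - 1 ≤ d + k)]
    have hz : ∑ i ∈ Finset.Ico 0 (k - 1), F i = 0 := by
      apply Finset.sum_eq_zero
      intro i hi
      simp only [Finset.mem_Ico] at hi
      exact h0 i (by omega)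
    rw [hz, zero_add]
  rw [eB, ← eA, splitRange]
  by_cases hd : k - 1 ≤ d
  · rw [add_comm]
    exact Finset.sum_Ico_consecutive F hd (by omega)
  · have h1' : Finset.Ico (k - 1) d = ∅ := Finset.Ico_eq_empty (by omega)
    rw [h1', Finset.sum_empty, add_zero,
        ← Finset.sum_Ico_consecutive F (by omega : d ≤ k - 1) (by omega : k - 1 ≤ d + k)]
    have hz : ∑ i ∈ Finset.Ico d (k - 1), F i = 0 := by
      apply Finset.sum_eq_zero
      intro i hi
      simp only [Finset.mem_Ico] at hi
      exact h0 i (by omega)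
    rw [hz, zero_add]
end

section
/- Let k ≥ 1 and d ≥ 0. The number of Replacement-Eggs outcome words of horizon d — namely binary words w of some length ℓ ≤ d such that either (a) ℓ = d and w does not contain k consecutive 0's, or (b) k ≤ ℓ ≤ d, the last k letters of w are all 0, and the prefix of w of length ℓ − 1 does not contain k consecutive 0's — equals ∑_{i=0}^{⌊d/(k+1)⌋} (−1)^i · C(d − i·k, i) · 2^{d − i(k+1)}. Consequently, the egg-drop number for Replacement Eggs starting with k eggs and at most d drops is H_{R,k}(d) = −1 + ∑_{i=0}^{⌊d/(k+1)⌋} (−1)^i · C(d − i·k, i) · 2^{d − i(k+1)}. -/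
/-! Both sides `f` satisfy `f (d + 1) + f (d - k) = 2 * f d` for `d ≥ k` and `f d = 2 ^ d` for
`d ≤ k`. For the alternating sum this is Pascal's rule, term by term. For the number `N d` of
outcomes, raising the horizon from `d` to `d + 1` replaces each full-length outcome, a word
avoiding `0^k`, by its two one-letter extensions; so `N (d + 1) = N d + A d`, where `A n` counts
the words of length `n` avoiding `0^k`. Such an extension contains `0^k` exactly when it reads
`u 1 0^k` with `u` avoiding `0^k` (or is `0^k` itself), whence `A (n + 1) + A (n - k) = 2 * A n`
for `n ≥ k`, and the recurrence for `N` follows by induction on `d`. -/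

theorem Nat.card_subtype_init {α : Type*} {n : ℕ} (P : (Fin n → α) → Prop) :
    Nat.card {w : Fin (n + 1) → α // P (Fin.init w)} = Nat.card α * Nat.card {u // P u} := by
  rw [← Nat.card_prod]
  exact Nat.card_congr
    { toFun := fun w => (w.1 (Fin.last n), ⟨Fin.init w.1, w.2⟩)
      invFun := fun x => ⟨Fin.snoc x.2.1 x.1, by simpa using x.2.2⟩
      left_inv := fun w => by simp
      right_inv := fun x => by simp }

theorem Nat.card_subtype_or_of_disjoint {α : Type*} [Finite α] {p q : α → Prop}
    (h : ∀ x, p x → ¬ q x) :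
    Nat.card {x // p x ∨ q x} = Nat.card {x // p x} + Nat.card {x // q x} := by
  classical
  rw [← Nat.card_sum]
  exact Nat.card_congr (subtypeOrEquiv p q (disjoint_iff_inf_le.mpr fun x hx => h x hx.1 hx.2))

theorem Nat.card_subtype_sigma_eq_sum {β : ℕ → Type*} [∀ n, Finite (β n)]
    {P : (Σ n, β n) → Prop} {d : ℕ} (hP : ∀ p, P p → p.1 ≤ d) :
    Nat.card {p // P p} = ∑ n ∈ Finset.range (d + 1), Nat.card {b : β n // P ⟨n, b⟩} := by
  rw [← Fin.sum_univ_eq_sum_range (fun n => Nat.card {b : β n // P ⟨n, b⟩}),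
    ← Nat.card_sigma]
  exact Nat.card_congr
    { toFun := fun p => ⟨⟨p.1.1, Nat.lt_succ_of_le (hP p.1 p.2)⟩, ⟨p.1.2, p.2⟩⟩
      invFun := fun q => ⟨⟨q.1, q.2.1⟩, q.2.2⟩
      left_inv := fun _ => rfl
      right_inv := fun _ => rfl }

namespace ReplacementEggs

open Finset

variable {k : ℕ}

theorem hasKConsecZeros_of_wordPrefix {n m : ℕ} {w : Fin n → Bool} {h : m ≤ n}
    (hw : HasKConsecZeros k (wordPrefix w m h)) : HasKConsecZeros k w := by
  obtain ⟨j, hj, hzero⟩ := hw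
  exact ⟨j, by omega, fun i hi₁ hi₂ => hzero ⟨i, by omega⟩ hi₁ hi₂⟩

def EndsWithZeros (k : ℕ) {n : ℕ} (w : Fin n → Bool) : Prop :=
  k ≤ n ∧ ∀ i : Fin n, n ≤ (i : ℕ) + k → w i = false

theorem EndsWithZeros.hasKConsecZeros {n : ℕ} {w : Fin n → Bool} (hw : EndsWithZeros k w) :
    HasKConsecZeros k w :=
  have hkn := hw.1
  ⟨n - k, by omega, fun i hi _ => hw.2 i (by omega)⟩

theorem hasKConsecZeros_iff_init {n : ℕ} (w : Fin (n + 1) → Bool) :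
    HasKConsecZeros k w ↔ HasKConsecZeros k (Fin.init w) ∨ EndsWithZeros k w := by
  constructor
  · rintro ⟨j, hj, hzero⟩
    by_cases hjn : j + k ≤ n
    · exact Or.inl ⟨j, hjn, fun i hi₁ hi₂ => hzero i.castSucc hi₁ hi₂⟩
    · exact Or.inr ⟨by omega, fun i hi => hzero i (by omega) (by omega)⟩
  · rintro (h | h)
    · exact hasKConsecZeros_of_wordPrefix (h := n.le_succ) h
    · exact h.hasKConsecZeros

/-- The word meets its first run of `k` zeros at its last letter: outcome words of type (b). -/
def IsStopped (k : ℕ) {n : ℕ} (w : Fin n → Bool) : Prop :=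
  EndsWithZeros k w ∧ ¬ HasKConsecZeros k (wordPrefix w (n - 1) (Nat.sub_le _ _))

theorem IsStopped.hasKConsecZeros {n : ℕ} {w : Fin n → Bool} (hw : IsStopped k w) :
    HasKConsecZeros k w :=
  hw.1.hasKConsecZeros

theorem not_hasKConsecZeros_init_iff {n : ℕ} (w : Fin (n + 1) → Bool) :
    ¬ HasKConsecZeros k (Fin.init w) ↔ ¬ HasKConsecZeros k w ∨ IsStopped k w := by
  change _ ↔ _ ∨ (EndsWithZeros k w ∧ ¬ HasKConsecZeros k (Fin.init w))
  rw [hasKConsecZeros_iff_init]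
  tauto

noncomputable def avoidCount (k n : ℕ) : ℕ :=
  Nat.card {w : Fin n → Bool // ¬ HasKConsecZeros k w}

noncomputable def stopCount (k n : ℕ) : ℕ :=
  Nat.card {w : Fin n → Bool // IsStopped k w}

theorem avoidCount_succ_add_stopCount_succ (k n : ℕ) :
    avoidCount k (n + 1) + stopCount k (n + 1) = 2 * avoidCount k n := by
  rw [avoidCount, stopCount,
    ← Nat.card_subtype_or_of_disjoint fun w hw hs => hw hs.hasKConsecZeros,
    ← Nat.card_congr (Equiv.subtypeEquivRight not_hasKConsecZeros_init_iff),
    Nat.card_subtype_init (fun u => ¬ HasKConsecZeros k u), Nat.card_eq_fintype_card,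
    Fintype.card_bool, avoidCount]

theorem stopCount_of_lt {n : ℕ} (h : n < k) : stopCount k n = 0 := by
  have : IsEmpty {w : Fin n → Bool // IsStopped k w} := ⟨fun w => by have := w.2.1.1; omega⟩
  exact Nat.card_of_isEmpty

theorem stopCount_self (hk : 1 ≤ k) : stopCount k k = 1 := by
  have hzeros : ∀ w : Fin k → Bool, IsStopped k w ↔ w = fun _ => false := by
    refine fun w => ⟨fun hw => funext fun i => hw.1.2 i (by omega), ?_⟩
    rintro rfl
    exact ⟨⟨le_rfl, fun _ _ => rfl⟩, fun ⟨j, hj, _⟩ => by omega⟩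
  rw [stopCount, Nat.card_congr (Equiv.subtypeEquivRight hzeros), Nat.card_unique]

theorem IsStopped.apply_of_le {n : ℕ} {w : Fin (n + k + 1) → Bool} (hw : IsStopped k w)
    (i : Fin (n + k + 1)) (hi : n ≤ i) : w i = decide ((i : ℕ) = n) := by
  obtain ⟨⟨-, hzero⟩, havoid⟩ := hw
  rcases hi.eq_or_lt with hin | hin
  · suffices w i = true by simpa [← hin]
    by_contra hwi
    -- otherwise positions `n, …, n + k - 1` are a run of zeros inside the prefix
    refine havoid ⟨n, by omega, fun j hj₁ hj₂ => ?_⟩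
    rcases hj₁.eq_or_lt with hjn | hjn
    · exact (congrArg w (Fin.ext (show (j : ℕ) = i by omega))).trans (by simpa using hwi)
    · exact hzero ⟨j, by omega⟩ (by simp; omega)
  · simpa [hin.ne'] using hzero i (by omega)

theorem isStopped_extend {n : ℕ} {u : Fin n → Bool} (hu : ¬ HasKConsecZeros k u) :
    IsStopped k fun i : Fin (n + k + 1) =>
      if h : (i : ℕ) < n then u ⟨i, h⟩ else decide ((i : ℕ) = n) := by
  refine ⟨⟨by omega, fun i hi => ?_⟩, fun ⟨j, hj, hzero⟩ => ?_⟩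
  · simp [show ¬ (i : ℕ) < n by omega, show (i : ℕ) ≠ n by omega]
  by_cases hjn : j + k ≤ n
  · exact hu ⟨j, hjn, fun i hi₁ hi₂ => by
      simpa [wordPrefix, show (i : ℕ) < n by omega] using hzero ⟨i, by omega⟩ hi₁ hi₂⟩
  · simpa [wordPrefix] using hzero ⟨n, by omega⟩ (by simp; omega) (by simp; omega)

theorem stopCount_add_succ (n : ℕ) : stopCount k (n + k + 1) = avoidCount k n := by
  refine Nat.card_congr (Equiv.ofBijective
    (fun w => ⟨wordPrefix w.1 n (by omega), fun h => w.2.2 (hasKConsecZeros_of_wordPrefix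
      (w := wordPrefix w.1 (n + k + 1 - 1) (Nat.sub_le _ _)) (h := by omega) h)⟩) ⟨?_, ?_⟩)
  · rintro ⟨w, hw⟩ ⟨v, hv⟩ heq
    refine Subtype.ext (funext fun i => ?_)
    by_cases hin : (i : ℕ) < n
    · exact congrFun (congrArg Subtype.val heq) ⟨i, hin⟩
    · change w i = v i
      rw [hw.apply_of_le i (by omega), hv.apply_of_le i (by omega)]
  · rintro ⟨u, hu⟩
    exact ⟨⟨_, isStopped_extend hu⟩, Subtype.ext (funext fun i => by simp [wordPrefix])⟩

theorem avoidCount_zero (hk : 1 ≤ k) : avoidCount k 0 = 1 := by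
  have : ∀ w : Fin 0 → Bool, ¬ HasKConsecZeros k w := fun _ ⟨j, hj, _⟩ => by omega
  rw [avoidCount, Nat.card_congr (Equiv.subtypeUnivEquiv this), Nat.card_unique]

theorem avoidCount_of_lt {n : ℕ} (h : n < k) : avoidCount k n = 2 ^ n := by
  induction n with
  | zero => exact avoidCount_zero h
  | succ n ih =>
    have := avoidCount_succ_add_stopCount_succ k n
    rw [stopCount_of_lt h, ih (by omega)] at this
    rw [pow_succ]
    omega

theorem avoidCount_self_add_one (hk : 1 ≤ k) : avoidCount k k + 1 = 2 ^ k := by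
  obtain ⟨m, rfl⟩ : ∃ m, k = m + 1 := ⟨k - 1, by omega⟩
  have := avoidCount_succ_add_stopCount_succ (m + 1) m
  rw [stopCount_self hk, avoidCount_of_lt (n := m) (by omega)] at this
  rw [pow_succ]
  omega

theorem avoidCount_succ_add {n : ℕ} (h : k ≤ n) :
    avoidCount k (n + 1) + avoidCount k (n - k) = 2 * avoidCount k n := by
  obtain ⟨m, rfl⟩ : ∃ m, n = m + k := ⟨n - k, by omega⟩
  rw [Nat.add_sub_cancel, ← stopCount_add_succ m]
  exact avoidCount_succ_add_stopCount_succ k (m + k)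

noncomputable def outcomeCount (k d : ℕ) : ℕ :=
  Nat.card {p : Σ ℓ : ℕ, Fin ℓ → Bool // ReplacementOutcome k d p}

theorem replacementOutcome_iff {d ℓ : ℕ} {w : Fin ℓ → Bool} :
    ReplacementOutcome k d ⟨ℓ, w⟩ ↔
      (ℓ = d ∧ ¬ HasKConsecZeros k w) ∨ (IsStopped k w ∧ ℓ ≤ d) := by
  simp only [ReplacementOutcome, IsStopped, EndsWithZeros]
  tauto

theorem outcomeCount_eq (k d : ℕ) :
    outcomeCount k d = avoidCount k d + ∑ ℓ ∈ range (d + 1), stopCount k ℓ := by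
  have hlen : ∀ p, ReplacementOutcome k d p → p.1 ≤ d := by
    rintro ⟨ℓ, w⟩ h
    change ℓ ≤ d
    rcases replacementOutcome_iff.1 h with h | h <;> omega
  have hshort : ∀ ℓ ∈ range d,
      Nat.card {w : Fin ℓ → Bool // ReplacementOutcome k d ⟨ℓ, w⟩} = stopCount k ℓ := by
    intro ℓ hℓ
    have hℓ := mem_range.1 hℓ
    exact Nat.card_congr (Equiv.subtypeEquivRight fun w => by
      rw [replacementOutcome_iff]; constructor <;> grind)
  have hfull : Nat.card {w : Fin d → Bool // ReplacementOutcome k d ⟨d, w⟩}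
      = avoidCount k d + stopCount k d := by
    rw [avoidCount, stopCount, ← Nat.card_subtype_or_of_disjoint
      fun w hw hs => hw hs.hasKConsecZeros]
    exact Nat.card_congr (Equiv.subtypeEquivRight fun w => by
      rw [replacementOutcome_iff]; simp)
  rw [outcomeCount, Nat.card_subtype_sigma_eq_sum hlen, sum_range_succ, sum_range_succ,
    sum_congr rfl hshort, hfull]
  ring

theorem outcomeCount_succ (k d : ℕ) :
    outcomeCount k (d + 1) = outcomeCount k d + avoidCount k d := by
  rw [outcomeCount_eq, outcomeCount_eq, sum_range_succ _ (d + 1)]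
  have := avoidCount_succ_add_stopCount_succ k d
  omega

theorem outcomeCount_of_le (hk : 1 ≤ k) {d : ℕ} (h : d ≤ k) : outcomeCount k d = 2 ^ d := by
  induction d with
  | zero =>
    rw [outcomeCount_eq, sum_range_one, avoidCount_zero hk, stopCount_of_lt hk, pow_zero,
      Nat.add_zero]
  | succ d ih =>
    rw [outcomeCount_succ, ih (by omega), avoidCount_of_lt (by omega), pow_succ, mul_two]

theorem outcomeCount_succ_add (hk : 1 ≤ k) {d : ℕ} (h : k ≤ d) :
    outcomeCount k (d + 1) + outcomeCount k (d - k) = 2 * outcomeCount k d := by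
  induction d, h using Nat.le_induction with
  | base =>
    rw [outcomeCount_succ, Nat.sub_self, outcomeCount_of_le hk le_rfl, outcomeCount_of_le hk
      (Nat.zero_le k), ← avoidCount_self_add_one hk]
    ring
  | succ d hd ih =>
    rw [outcomeCount_succ k (d + 1), show d + 1 - k = d - k + 1 by omega,
      outcomeCount_succ k (d - k)]
    have := avoidCount_succ_add hd
    rw [outcomeCount_succ] at ih ⊢
    omega

def altTerm (k d i : ℕ) : ℤ := (-1) ^ i * ((d - i * k).choose i : ℤ) * 2 ^ (d - i * (k + 1))

def altSum (k d : ℕ) : ℤ := ∑ i ∈ range (d / (k + 1) + 1), altTerm k d i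

theorem altTerm_eq_zero {d i : ℕ} (h : d < i * (k + 1)) : altTerm k d i = 0 := by
  have hi : i ≠ 0 := by rintro rfl; simp at h
  have hlt : d - i * k < i := by rw [Nat.mul_succ] at h; omega
  simp [altTerm, Nat.choose_eq_zero_of_lt hlt]

theorem altSum_eq_sum_range {d n : ℕ} (h : d / (k + 1) < n) :
    altSum k d = ∑ i ∈ range n, altTerm k d i := by
  refine sum_subset (range_subset_range.2 h) fun i _ hi => altTerm_eq_zero ?_
  rw [mem_range, not_lt, Nat.succ_le_iff, Nat.div_lt_iff_lt_mul k.succ_pos] at hi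
  exact hi

theorem altSum_of_le {d : ℕ} (h : d ≤ k) : altSum k d = 2 ^ d := by
  simp [altSum, altTerm, Nat.div_eq_of_lt (Nat.lt_succ_of_le h)]

theorem altTerm_succ_succ_add {d : ℕ} (h : k ≤ d) (i : ℕ) :
    altTerm k (d + 1) (i + 1) + altTerm k (d - k) i = 2 * altTerm k d (i + 1) := by
  -- `omega` treats these products as atoms, so their linear relations are supplied here
  have h_succ_mul : (i + 1) * k = i * k + k := by ring
  have h_succ_mul_succ : (i + 1) * (k + 1) = i * (k + 1) + (k + 1) := by ring
  have h_mul_succ : i * (k + 1) = i * k + i := by ring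
  rcases lt_or_ge (d + 1) ((i + 1) * (k + 1)) with hd | hd
  · rw [altTerm_eq_zero hd, altTerm_eq_zero (d := d) (i := i + 1) (by omega),
      altTerm_eq_zero (d := d - k) (i := i) (by omega)]
    ring
  rcases hd.eq_or_lt with hd | hd
  · simp only [altTerm]
    rw [show d + 1 - (i + 1) * k = i + 1 by omega, show d + 1 - (i + 1) * (k + 1) = 0 by omega,
      show d - k - i * k = i by omega, show d - k - i * (k + 1) = 0 by omega,
      show d - (i + 1) * k = i by omega, Nat.choose_self, Nat.choose_self, Nat.choose_succ_self]
    ring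
  · obtain ⟨e, rfl⟩ : ∃ e, d = (i + 1) * (k + 1) + e := ⟨d - (i + 1) * (k + 1), by omega⟩
    simp only [altTerm]
    rw [show (i + 1) * (k + 1) + e + 1 - (i + 1) * k = e + i + 1 + 1 by omega,
      show (i + 1) * (k + 1) + e + 1 - (i + 1) * (k + 1) = e + 1 by omega,
      show (i + 1) * (k + 1) + e - k - i * k = e + i + 1 by omega,
      show (i + 1) * (k + 1) + e - k - i * (k + 1) = e + 1 by omega,
      show (i + 1) * (k + 1) + e - (i + 1) * k = e + i + 1 by omega,
      show (i + 1) * (k + 1) + e - (i + 1) * (k + 1) = e by omega,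
      Nat.choose_succ_succ (e + i + 1), Nat.cast_add]
    ring

theorem altSum_succ_add {d : ℕ} (h : k ≤ d) :
    altSum k (d + 1) + altSum k (d - k) = 2 * altSum k d := by
  have hdiv : ∀ m, m / (k + 1) ≤ m := fun m => Nat.div_le_self m (k + 1)
  rw [altSum_eq_sum_range (n := d + 2) (by have := hdiv (d + 1); omega),
    altSum_eq_sum_range (n := d + 2) (d := d) (by have := hdiv d; omega),
    altSum_eq_sum_range (n := d + 1) (d := d - k) (by have := hdiv (d - k); omega),
    sum_range_succ' _ (d + 1), sum_range_succ' (altTerm k d) (d + 1), add_right_comm,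
    ← sum_add_distrib, sum_congr rfl fun i _ => altTerm_succ_succ_add h i, ← mul_sum]
  simp only [altTerm, pow_zero, one_mul, zero_mul, Nat.sub_zero, Nat.choose_zero_right,
    Nat.cast_one, pow_succ]
  ring

theorem eq_of_succ_add_eq_two_mul {f g : ℕ → ℤ} (k : ℕ) (h₀ : ∀ d ≤ k, f d = g d)
    (hf : ∀ d, k ≤ d → f (d + 1) + f (d - k) = 2 * f d)
    (hg : ∀ d, k ≤ d → g (d + 1) + g (d - k) = 2 * g d) (d : ℕ) : f d = g d := by
  induction d using Nat.strong_induction_on with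
  | _ d ih =>
    by_cases hd : d ≤ k
    · exact h₀ d hd
    obtain ⟨e, rfl⟩ : ∃ e, d = e + 1 := ⟨d - 1, by omega⟩
    linarith [hf e (by omega), hg e (by omega), ih e (by omega), ih (e - k) (by omega)]

end ReplacementEggs

open ReplacementEggs

/-- the number of Replacement-Eggs outcome words of horizon `d` equals
`∑_{i=0}^{⌊d/(k+1)⌋} (-1)^i C(d - i k, i) 2^{d - i(k+1)}`; consequently the
Replacement-Eggs egg-drop number is `-1` plus that alternating sum. -/
theorem replacement_eggs_count_alternating (k : ℕ) (hk : 1 ≤ k) (d : ℕ) :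
    ((Nat.card {p : Σ ℓ : ℕ, Fin ℓ → Bool // ReplacementOutcome k d p} : ℕ) : ℤ)
        = ∑ i ∈ Finset.range (d / (k + 1) + 1),
            (-1) ^ i * ((d - i * k).choose i : ℤ) * 2 ^ (d - i * (k + 1)) ∧
    ((Nat.card {p : Σ ℓ : ℕ, Fin ℓ → Bool // ReplacementOutcome k d p} : ℕ) : ℤ) - 1
        = -1 + ∑ i ∈ Finset.range (d / (k + 1) + 1),
            (-1) ^ i * ((d - i * k).choose i : ℤ) * 2 ^ (d - i * (k + 1)) := by
  have hcount : (outcomeCount k d : ℤ) = altSum k d :=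
    eq_of_succ_add_eq_two_mul (f := fun d => (outcomeCount k d : ℤ)) k
      (fun d hd => by rw [outcomeCount_of_le hk hd, altSum_of_le hd]; push_cast; rfl)
      (fun d hd => by exact_mod_cast outcomeCount_succ_add hk hd)
      (fun d hd => altSum_succ_add hd) d
  refine ⟨hcount, ?_⟩
  rw [sub_eq_neg_add]
  exact congrArg (-1 + ·) hcount
end

section
/- Let k, m, n be non-negative integers with k ≤ n ≤ m + k. The number of monotone lattice paths from (0,0) to (m,n) — encoded as sequences of m right-steps and n up-steps, i.e., functions from Fin (m+n) to {R, U} with exactly n up-steps — that touch the line y = x + k (i.e., have some prefix in which the number of up-steps equals the number of right-steps plus k) equals C(m+n, n−k). -/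
/-!
Reflection principle. Track the height `y - x` of a path. If a path from `(0,0)` to `(m,n)` touches
`y = x + k`, flipping every step before its first touch turns it into a path whose height ends
lower by `2k`, i.e. one with `n - k` up-steps, and which first touches `y = x - k` at the same
moment; flipping before the first touch of `y = x - k` undoes this. Since `n ≤ m + k`, a path with
`n - k` up-steps ends on or below `y = x - k`, so it touches that line, as its height moves by `±1`.
Hence touching paths are in bijection with all `C(m+n, n-k)` paths having `n - k` up-steps.
-/

/-- A monotone lattice path with `m` right-steps and `n` up-steps, encoded as a word
`w : Fin (m+n) → Bool` (`true` = up-step, `false` = right-step), touches the line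
`y = x + k` if some prefix contains exactly `k` more up-steps than right-steps. -/
def TouchesLine (m n k : ℕ) (w : Fin (m + n) → Bool) : Prop :=
  ∃ i : ℕ, i ≤ m + n ∧
    (Finset.univ.filter (fun j : Fin (m + n) => (j : ℕ) < i ∧ w j = true)).card
      = (Finset.univ.filter (fun j : Fin (m + n) => (j : ℕ) < i ∧ w j = false)).card + k

open Finset

theorem exists_eq_of_forall_sub_one_le (f : ℕ → ℤ) {M : ℕ} {c : ℤ}
    (hstep : ∀ i < M, f i - 1 ≤ f (i + 1)) (h0 : c ≤ f 0) (hM : f M ≤ c) :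
    ∃ i ≤ M, f i = c := by
  induction M with
  | zero => exact ⟨0, le_rfl, le_antisymm hM h0⟩
  | succ M ih =>
    by_cases hlow : f M ≤ c
    · obtain ⟨i, hi, hfi⟩ := ih (fun i hi => hstep i (by omega)) hlow
      exact ⟨i, by omega, hfi⟩
    · exact ⟨M + 1, le_rfl, by linarith [hstep M (by omega)]⟩

theorem card_fun_bool_card_true (N r : ℕ) :
    Nat.card {w : Fin N → Bool // #{j | w j = true} = r} = N.choose r := by
  let e : {w : Fin N → Bool // #{j | w j = true} = r} ≃ {s : Finset (Fin N) // #s = r} :=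
    { toFun := fun w => ⟨({j | w.1 j = true} : Finset _), w.2⟩
      invFun := fun s => ⟨fun j => decide (j ∈ s.1), by simp [s.2]⟩
      left_inv := fun w => Subtype.ext (funext fun j => by simp)
      right_inv := fun s => Subtype.ext (by ext j; simp) }
  rw [Nat.card_congr e, Nat.card_eq_fintype_card, Fintype.card_finset_len, Fintype.card_fin]

namespace LatticePath

variable {N : ℕ}

/-- The `j`-th step of `w` as `+1` (up) or `-1` (right), and `0` past the end of the path. -/
def stepAt (w : Fin N → Bool) (j : ℕ) : ℤ :=
  if h : j < N then (if w ⟨j, h⟩ then 1 else -1) else 0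

/-- The value of `y - x` after the first `i` steps. -/
def height (w : Fin N → Bool) (i : ℕ) : ℤ := ∑ j ∈ range i, stepAt w j

theorem height_zero (w : Fin N → Bool) : height w 0 = 0 := by
  simp [height]

theorem height_sub_one_le_height_succ (w : Fin N → Bool) (i : ℕ) :
    height w i - 1 ≤ height w (i + 1) := by
  rw [height, height, sum_range_succ]
  unfold stepAt
  split_ifs <;> omega

theorem card_sub_card_eq_height (w : Fin N → Bool) {i : ℕ} (hi : i ≤ N) :
    (#{j : Fin N | (j : ℕ) < i ∧ w j = true} : ℤ) - #{j : Fin N | (j : ℕ) < i ∧ w j = false}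
      = height w i := by
  rw [natCast_card_filter, natCast_card_filter, ← sum_sub_distrib]
  have hterm : ∀ j : Fin N, ((if (j : ℕ) < i ∧ w j = true then 1 else 0) -
      (if (j : ℕ) < i ∧ w j = false then 1 else 0) : ℤ) = if (j : ℕ) < i then stepAt w j else 0 := by
    intro j
    simp only [stepAt, j.isLt, dif_pos, Fin.eta]
    cases w j <;> split_ifs <;> simp_all
  rw [sum_congr rfl fun j _ => hterm j,
    Fin.sum_univ_eq_sum_range (fun j => if j < i then stepAt w j else 0), ← sum_filter, height]
  congr 1
  ext j
  simp only [mem_filter, mem_range]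
  omega

theorem card_true_eq_iff (w : Fin N → Bool) (r : ℕ) :
    #{j | w j = true} = r ↔ height w N = 2 * r - N := by
  have hdiff := card_sub_card_eq_height w le_rfl
  have hsum := card_filter_add_card_filter_not (s := univ) (fun j : Fin N => w j = true)
  simp only [Fin.is_lt, true_and, Bool.not_eq_true, card_univ, Fintype.card_fin] at hdiff hsum
  omega

def flipPrefix (i : ℕ) (w : Fin N → Bool) : Fin N → Bool :=
  fun j => if (j : ℕ) < i then !w j else w j

theorem flipPrefix_flipPrefix (i : ℕ) (w : Fin N → Bool) : flipPrefix i (flipPrefix i w) = w := by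
  funext j
  unfold flipPrefix
  split_ifs <;> simp

theorem stepAt_flipPrefix (i : ℕ) (w : Fin N → Bool) (j : ℕ) :
    stepAt (flipPrefix i w) j = if j < i then -stepAt w j else stepAt w j := by
  unfold stepAt flipPrefix
  split_ifs <;> simp_all

theorem height_flipPrefix_of_le (w : Fin N → Bool) {i l : ℕ} (hl : l ≤ i) :
    height (flipPrefix i w) l = -height w l := by
  rw [height, height, ← sum_neg_distrib]
  refine sum_congr rfl fun j hj => ?_
  rw [stepAt_flipPrefix, if_pos (by simp at hj; omega)]

theorem height_flipPrefix_of_ge (w : Fin N → Bool) {i l : ℕ} (hl : i ≤ l) :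
    height (flipPrefix i w) l = height w l - 2 * height w i := by
  have hsplit : ∀ v : Fin N → Bool, height v l = height v i + ∑ j ∈ Ico i l, stepAt v j :=
    fun v => (sum_range_add_sum_Ico _ hl).symm
  have hmid : ∑ j ∈ Ico i l, stepAt (flipPrefix i w) j = ∑ j ∈ Ico i l, stepAt w j :=
    sum_congr rfl fun j hj => by rw [stepAt_flipPrefix, if_neg (by simp at hj; omega)]
  rw [hsplit, hsplit w, hmid, height_flipPrefix_of_le w le_rfl]
  ring

def Hits (w : Fin N → Bool) (c : ℤ) : Prop := ∃ i ≤ N, height w i = c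

theorem touchesLine_iff_hits {m n k : ℕ} (w : Fin (m + n) → Bool) :
    TouchesLine m n k w ↔ Hits w k :=
  exists_congr fun i => and_congr_right fun hi => by
    rw [← card_sub_card_eq_height w hi]
    omega

theorem hits_of_height_le (w : Fin N → Bool) {c : ℤ} (hc : c ≤ 0) (hN : height w N ≤ c) :
    Hits w c :=
  exists_eq_of_forall_sub_one_le (height w) (fun i _ => height_sub_one_le_height_succ w i)
    (by rwa [height_zero]) hN

theorem exists_find_hits_flipPrefix {w : Fin N → Bool} {c : ℤ} (h : Hits w c) :
    ∃ h' : Hits (flipPrefix (Nat.find h) w) (-c), Nat.find h' = Nat.find h := by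
  obtain ⟨hiN, hi⟩ := Nat.find_spec h
  have hneg : height (flipPrefix (Nat.find h) w) (Nat.find h) = -c := by
    rw [height_flipPrefix_of_le w le_rfl, hi]
  refine ⟨⟨_, hiN, hneg⟩, (Nat.find_eq_iff _).2 ⟨⟨hiN, hneg⟩, fun j hj ⟨hjN, hjc⟩ => ?_⟩⟩
  rw [height_flipPrefix_of_le w hj.le, neg_inj] at hjc
  exact Nat.find_min h hj ⟨hjN, hjc⟩

open Classical in
noncomputable def reflectFirstHit (c : ℤ) (w : Fin N → Bool) : Fin N → Bool :=
  if h : Hits w c then flipPrefix (Nat.find h) w else w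

theorem reflectFirstHit_of_hits {w : Fin N → Bool} {c : ℤ} (h : Hits w c) :
    reflectFirstHit c w = flipPrefix (Nat.find h) w :=
  dif_pos h

theorem hits_reflectFirstHit {w : Fin N → Bool} {c : ℤ} (h : Hits w c) :
    Hits (reflectFirstHit c w) (-c) := by
  rw [reflectFirstHit_of_hits h]
  exact (exists_find_hits_flipPrefix h).1

theorem height_reflectFirstHit {w : Fin N → Bool} {c : ℤ} (h : Hits w c) :
    height (reflectFirstHit c w) N = height w N - 2 * c := by
  obtain ⟨hiN, hi⟩ := Nat.find_spec h
  rw [reflectFirstHit_of_hits h, height_flipPrefix_of_ge w hiN, hi]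

theorem reflectFirstHit_reflectFirstHit {w : Fin N → Bool} {c : ℤ} (h : Hits w c) :
    reflectFirstHit (-c) (reflectFirstHit c w) = w := by
  obtain ⟨h', hfind⟩ := exists_find_hits_flipPrefix h
  rw [reflectFirstHit_of_hits h, reflectFirstHit_of_hits h', hfind, flipPrefix_flipPrefix]

theorem card_hits_eq_card_hits_neg (c t : ℤ) :
    Nat.card {w : Fin N → Bool // height w N = t ∧ Hits w c}
      = Nat.card {w : Fin N → Bool // height w N = t - 2 * c ∧ Hits w (-c)} :=
  Nat.card_congr
    { toFun := fun w => ⟨reflectFirstHit c w.1,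
        by rw [height_reflectFirstHit w.2.2, w.2.1], hits_reflectFirstHit w.2.2⟩
      invFun := fun v => ⟨reflectFirstHit (-c) v.1,
        by rw [height_reflectFirstHit v.2.2, v.2.1]; ring,
        by simpa using hits_reflectFirstHit v.2.2⟩
      left_inv := fun w => Subtype.ext (reflectFirstHit_reflectFirstHit w.2.2)
      right_inv := fun v => Subtype.ext (by
        simpa using reflectFirstHit_reflectFirstHit v.2.2) }

end LatticePath

open LatticePath

/-- reflection count: for `k ≤ n ≤ m + k`, the number of monotone
lattice paths from `(0,0)` to `(m,n)` that touch the line `y = x + k` is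
`C(m+n, n-k)`. -/
theorem bad_paths_count (k m n : ℕ) (hkn : k ≤ n) (hnm : n ≤ m + k) :
    Nat.card {w : Fin (m + n) → Bool //
        (Finset.univ.filter (fun j => w j = true)).card = n ∧ TouchesLine m n k w}
      = (m + n).choose (n - k) := by
  calc _ = Nat.card {w : Fin (m + n) → Bool // height w (m + n) = n - m ∧ Hits w k} :=
        Nat.card_congr <| Equiv.subtypeEquivRight fun w =>
          and_congr ((card_true_eq_iff w n).trans (by push_cast; omega)) (touchesLine_iff_hits w)
    _ = Nat.card {w : Fin (m + n) → Bool // height w (m + n) = n - m - 2 * k ∧ Hits w (-k)} :=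
        card_hits_eq_card_hits_neg _ _
    _ = Nat.card {w : Fin (m + n) → Bool // #{j | w j = true} = n - k} :=
        Nat.card_congr <| Equiv.subtypeEquivRight fun w => by
          rw [card_true_eq_iff]
          push_cast [hkn]
          exact ⟨fun h => by linarith [h.1],
            fun h => ⟨by linarith, hits_of_height_le w (by omega) (by omega)⟩⟩
    _ = _ := card_fun_bool_card_true _ _
end

section
/- Let k ≥ 1 and m ≥ 0, and let G_k(m, m+k−1) denote the number of sequences of m entries +1 and (m+k−1) entries −1 all of whose partial sums are strictly greater than −k. Then (2m + k) · G_k(m, m+k−1) = k · C(2m+k, m); equivalently, G_k(m, m+k−1) = C(2m+k−1, m) − C(2m+k−1, m−1). -/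
/-- The partial sum `a 0 + a 1 + ⋯ + a i` of the sequence `a`. -/
def partialSum {n : ℕ} (a : Fin n → ℤ) (i : Fin n) : ℤ :=
  ∑ j ∈ Finset.univ.filter (fun j => j ≤ i), a j

/-- `a` is a sequence of `m` entries `+1` and `n` entries `-1`, all of whose
(nonempty) partial sums are strictly greater than `-k`. -/
def BaileySeq (k m n : ℕ) (a : Fin (m + n) → ℤ) : Prop :=
  (∀ i, a i = 1 ∨ a i = -1) ∧
  (Finset.univ.filter (fun i => a i = -1)).card = n ∧
  ∀ i : Fin (m + n), -(k : ℤ) < partialSum a i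

/-- Binomial coefficient `C(a, b)` with integer lower index, equal to `0` when
`b < 0`. -/
def chooseInt (a : ℕ) (b : ℤ) : ℤ :=
  if 0 ≤ b then (a.choose b.toNat : ℤ) else 0

/-!
Removing the first step of a sequence gives the recursion
`G_{k+1}(m, n+1) = G_{k+2}(m-1, n+1) + G_k(m, n)`, where the first term is present only for
`m > 0` and the second only for `k > 0`. The reflection-principle count
`C(m+n, n) - C(m+n, m+k)` satisfies the same recursion by Pascal's rule; at `k = 0` it vanishes
by the symmetry of binomial coefficients, which matches the missing second term. For
`n = m + k - 1` the two binomials combine into `k / (2m+k) * C(2m+k, m)`.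
-/

theorem List.count_ofFn {α : Type*} [DecidableEq α] {N : ℕ} (a : Fin N → α) (x : α) :
    (List.ofFn a).count x = (Finset.univ.filter (fun i => a i = x)).card := by
  rw [List.ofFn_eq_map, ← Multiset.coe_count, ← Multiset.map_coe, Multiset.count_map]
  simp [Finset.card, Finset.filter_val, Fin.univ_def, eq_comm]

instance {α : Type*} {p : Prop} {q : α → Prop} [Finite {a // q a}] : Finite {a // p ∧ q a} :=
  .of_injective (fun a => (⟨a.1, a.2.2⟩ : {a // q a}))
    fun _ _ h => Subtype.ext (congrArg (·.1) h)

theorem Nat.card_subtype_const_and {α : Type*} (p : Prop) [Decidable p] (q : α → Prop) :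
    Nat.card {a // p ∧ q a} = if p then Nat.card {a // q a} else 0 := by
  split_ifs with hp <;> simp [hp]

def PrefixSumsAbove {α : Type*} [AddCommMonoid α] [LT α] (b : α) (l : List α) : Prop :=
  ∀ i < l.length, b < (l.take (i + 1)).sum

theorem prefixSumsAbove_cons {α : Type*} [AddCommGroup α] [LinearOrder α] [IsOrderedAddMonoid α]
    {b x : α} {l : List α} :
    PrefixSumsAbove b (x :: l) ↔ b < x ∧ PrefixSumsAbove (b - x) l := by
  simp only [PrefixSumsAbove, List.length_cons, Nat.forall_lt_succ_left, List.take_succ_cons,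
    List.sum_cons, List.take_zero, List.sum_nil, add_zero, sub_lt_iff_lt_add']

theorem prefixSumsAbove_of_nonneg {α : Type*} [AddCommMonoid α] [PartialOrder α]
    [IsOrderedAddMonoid α] {b : α} {l : List α} (hb : b < 0) (hl : ∀ x ∈ l, 0 ≤ x) :
    PrefixSumsAbove b l :=
  fun _ _ => hb.trans_le (List.sum_nonneg fun x hx => hl x (List.mem_of_mem_take hx))

def BallotList (k m n : ℕ) (l : List ℤ) : Prop :=
  (∀ x ∈ l, x = 1 ∨ x = -1) ∧ l.length = m + n ∧ l.count (-1) = n ∧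
    PrefixSumsAbove (-k : ℤ) l

theorem ballotList_one_cons {k m n : ℕ} {t : List ℤ} :
    BallotList k m n (1 :: t) ↔ 0 < m ∧ BallotList (k + 1) (m - 1) n t := by
  have := t.count_le_length (a := -1)
  simp only [BallotList, List.forall_mem_cons, List.length_cons,
    List.count_cons_of_ne (by decide : (1 : ℤ) ≠ -1), prefixSumsAbove_cons, true_or, true_and]
  rw [show -(k : ℤ) - 1 = -((k + 1 : ℕ) : ℤ) by push_cast; ring]
  constructor
  · rintro ⟨h, hl, hc, -, hs⟩
    exact ⟨by omega, h, by omega, hc, hs⟩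
  · rintro ⟨hm, h, hl, hc, hs⟩
    exact ⟨h, by omega, hc, by omega, hs⟩

theorem ballotList_neg_one_cons {k m n : ℕ} {t : List ℤ} :
    BallotList (k + 1) m (n + 1) (-1 :: t) ↔ 0 < k ∧ BallotList k m n t := by
  simp only [BallotList, List.forall_mem_cons, List.length_cons, List.count_cons_self,
    prefixSumsAbove_cons, or_true, true_and]
  rw [show -((k + 1 : ℕ) : ℤ) - -1 = -k by push_cast; ring]
  constructor
  · rintro ⟨h, hl, hc, hk, hs⟩
    exact ⟨by omega, h, by omega, by omega, hs⟩
  · rintro ⟨hk, h, hl, hc, hs⟩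
    exact ⟨h, by omega, by omega, by omega, hs⟩

theorem ballotList_zero_right_iff {k m : ℕ} {l : List ℤ} :
    BallotList (k + 1) m 0 l ↔ l = List.replicate m 1 := by
  constructor
  · rintro ⟨hl, hlen, hc, -⟩
    refine List.eq_replicate_iff.2 ⟨hlen, fun x hx => (hl x hx).resolve_right ?_⟩
    rintro rfl
    exact List.count_eq_zero.1 hc hx
  · rintro rfl
    refine ⟨fun x hx => .inl (List.eq_of_mem_replicate hx), by simp,
      by simp [List.count_replicate], prefixSumsAbove_of_nonneg (by omega) fun x hx => ?_⟩
    simp [List.eq_of_mem_replicate hx]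

theorem partialSum_eq_sum_take {N : ℕ} (a : Fin N → ℤ) (i : Fin N) :
    partialSum a i = ((List.ofFn a).take (i + 1)).sum := by
  rw [List.sum_take_ofFn, partialSum]
  congr 1
  ext j
  simp only [Finset.mem_filter, Finset.mem_univ, true_and, Fin.le_def, Nat.lt_succ_iff]

theorem baileySeq_iff_ballotList {k m n : ℕ} (a : Fin (m + n) → ℤ) :
    BaileySeq k m n a ↔ BallotList k m n (List.ofFn a) := by
  simp only [BaileySeq, BallotList, List.forall_mem_ofFn_iff, List.length_ofFn, List.count_ofFn,
    PrefixSumsAbove, Fin.forall_iff, partialSum_eq_sum_take, true_and]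

def baileySeqEquivBallotList (k m n : ℕ) :
    {a : Fin (m + n) → ℤ // BaileySeq k m n a} ≃ {l : List ℤ // BallotList k m n l} :=
  ((Equiv.vectorEquivFin ℤ (m + n)).symm.subtypeEquiv fun a => by
      rw [baileySeq_iff_ballotList, ← List.Vector.toList_ofFn]; rfl).trans
    (Equiv.subtypeSubtypeEquivSubtype fun h => h.2.1)

instance (k m n : ℕ) : Finite {a : Fin (m + n) → ℤ // BaileySeq k m n a} :=
  Set.Finite.to_subtype <| (Set.Finite.pi fun _ => Set.toFinite {1, -1}).subset
    fun _ ha i _ => ha.1 i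

instance (k m n : ℕ) : Finite {l : List ℤ // BallotList k m n l} :=
  .of_equiv _ (baileySeqEquivBallotList k m n)

noncomputable def ballotCount (k m n : ℕ) : ℕ :=
  Nat.card {l : List ℤ // BallotList k m n l}

theorem ballotCount_zero_right (k m : ℕ) : ballotCount (k + 1) m 0 = 1 := by
  rw [ballotCount, Nat.card_congr (Equiv.subtypeEquivRight fun _ => ballotList_zero_right_iff),
    Nat.card_unique]

theorem ballotCount_succ (k m n : ℕ) :
    ballotCount (k + 1) m (n + 1) =
      (if 0 < m then ballotCount (k + 2) (m - 1) (n + 1) else 0) +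
        if 0 < k then ballotCount k m n else 0 := by
  let cons : {t // 0 < m ∧ BallotList (k + 2) (m - 1) (n + 1) t} ⊕
      {t // 0 < k ∧ BallotList k m n t} → {l // BallotList (k + 1) m (n + 1) l} :=
    Sum.elim (fun t => ⟨1 :: t.1, ballotList_one_cons.2 t.2⟩)
      (fun t => ⟨-1 :: t.1, ballotList_neg_one_cons.2 t.2⟩)
  have hcons : cons.Bijective := by
    refine ⟨?_, ?_⟩
    · refine Function.Injective.sumElim ?_ ?_ fun t t' h => ?_
      · exact fun t t' h => Subtype.ext (List.cons_injective (congrArg Subtype.val h))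
      · exact fun t t' h => Subtype.ext (List.cons_injective (congrArg Subtype.val h))
      · simpa using congrArg (·.1.head?) h
    · rintro ⟨_ | ⟨x, t⟩, hl⟩
      · simpa using hl.2.1
      · rcases hl.1 x (by simp) with rfl | rfl
        · exact ⟨.inl ⟨t, ballotList_one_cons.1 hl⟩, rfl⟩
        · exact ⟨.inr ⟨t, ballotList_neg_one_cons.1 hl⟩, rfl⟩
  rw [ballotCount, ← Nat.card_congr (Equiv.ofBijective cons hcons), Nat.card_sum,
    Nat.card_subtype_const_and, Nat.card_subtype_const_and, ballotCount, ballotCount]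

def ballotNumber (k m n : ℕ) : ℤ :=
  (m + n).choose n - (m + n).choose (m + k)

theorem ballotNumber_zero_left (m n : ℕ) : ballotNumber 0 m n = 0 := by
  rw [ballotNumber, add_zero, Nat.choose_symm_add, sub_self]

theorem ballotNumber_zero_right (k m : ℕ) : ballotNumber (k + 1) m 0 = 1 := by
  simp [ballotNumber, Nat.choose_eq_zero_of_lt]

theorem ballotNumber_succ {k m n : ℕ} (h : n ≤ m + k) :
    ballotNumber (k + 1) m (n + 1) =
      (if 0 < m then ballotNumber (k + 2) (m - 1) (n + 1) else 0) + ballotNumber k m n := by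
  rcases m with _ | m
  · have : n.choose (k + 1) = 0 := Nat.choose_eq_zero_of_lt (by omega)
    simp [ballotNumber, Nat.choose_succ_succ', this]
  · rw [if_pos m.succ_pos, ballotNumber, ballotNumber, ballotNumber, add_tsub_cancel_right,
      show m + 1 + (n + 1) = m + n + 1 + 1 by ring, show m + (n + 1) = m + n + 1 by ring,
      show m + 1 + n = m + n + 1 by ring, show m + 1 + (k + 1) = m + k + 1 + 1 by ring,
      show m + (k + 2) = m + k + 1 + 1 by ring, show m + 1 + k = m + k + 1 by ring,
      Nat.choose_succ_succ' (m + n + 1) n, Nat.choose_succ_succ' (m + n + 1) (m + k + 1)]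
    push_cast
    ring

theorem ballotCount_eq_ballotNumber {k m n : ℕ} (h : n ≤ m + k + 1) :
    (ballotCount (k + 1) m n : ℤ) = ballotNumber (k + 1) m n := by
  induction n generalizing k m with
  | zero => simp [ballotCount_zero_right, ballotNumber_zero_right]
  | succ n ihn =>
    have ih_guarded {k m : ℕ} (h : n ≤ m + k) :
        ((if 0 < k then ballotCount k m n else 0 : ℕ) : ℤ) = ballotNumber k m n := by
      rcases k with _ | k
      · simp [ballotNumber_zero_left]
      · simpa using ihn (by omega)
    induction m generalizing k with
    | zero =>
      simpa [ballotCount_succ, ballotNumber_succ (show n ≤ 0 + k by omega)]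
        using ih_guarded (by omega)
    | succ m ihm =>
      rw [ballotCount_succ, ballotNumber_succ (by omega), Nat.cast_add, ih_guarded (by omega)]
      simpa using ihm (k := k + 1) (by omega)

theorem card_baileySeq_eq_ballotNumber {k m n : ℕ} (h : n ≤ m + k + 1) :
    (Nat.card {a // BaileySeq (k + 1) m n a} : ℤ) = ballotNumber (k + 1) m n := by
  rw [Nat.card_congr (baileySeqEquivBallotList _ _ _), ← ballotCount,
    ballotCount_eq_ballotNumber h]

theorem mul_ballotNumber_add_self (k m : ℕ) :
    ((2 * m + k + 1 : ℕ) : ℤ) * ballotNumber (k + 1) m (m + k) =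
      (k + 1) * (2 * m + k + 1).choose m := by
  have hsymm : (m + (m + k) + 1).choose (m + k + 1) = (m + (m + k) + 1).choose m :=
    (Nat.choose_symm_of_eq_add (by ring)).symm
  have upper : ((m + (m + k) + 1 : ℕ) : ℤ) * (m + (m + k)).choose (m + k) =
      (m + (m + k) + 1).choose m * (m + k + 1) := by
    rw [← hsymm]
    exact_mod_cast Nat.add_one_mul_choose_eq _ _
  have lower : ((m + (m + k)).choose (m + k + 1) : ℤ) * (m + (m + k) + 1 : ℕ) =
      (m + (m + k) + 1).choose m * m := by
    have := Nat.choose_mul_succ_eq (m + (m + k)) (m + k + 1)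
    rw [hsymm, show m + (m + k) + 1 - (m + k + 1) = m by omega] at this
    exact_mod_cast this
  rw [ballotNumber, show 2 * m + k + 1 = m + (m + k) + 1 by ring,
    show m + (k + 1) = m + k + 1 by ring]
  linear_combination upper - lower

theorem ballotNumber_add_self_eq (k m : ℕ) :
    ballotNumber (k + 1) m (m + k) =
      (2 * m + k).choose m - chooseInt (2 * m + k) ((m : ℤ) - 1) := by
  rw [ballotNumber, show 2 * m + k = m + (m + k) by ring, Nat.choose_symm_add]
  rcases m with _ | m
  · simp [chooseInt]
  · rw [show ((m + 1 : ℕ) : ℤ) - 1 = m by push_cast; ring, chooseInt, if_pos (by positivity),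
      Int.toNat_natCast,
      Nat.choose_symm_of_eq_add (show m + 1 + (m + 1 + k) = m + 1 + (k + 1) + m by ring)]

/-- `(2m+k) ⬝ G_k(m, m+k-1) = k ⬝ C(2m+k, m)`; equivalently
`G_k(m, m+k-1) = C(2m+k-1, m) - C(2m+k-1, m-1)`. -/
theorem bailey_special_count (k : ℕ) (hk : 1 ≤ k) (m : ℕ) :
    (2 * m + k) * Nat.card {a : Fin (m + (m + k - 1)) → ℤ // BaileySeq k m (m + k - 1) a}
        = k * (2 * m + k).choose m ∧
    ((Nat.card {a : Fin (m + (m + k - 1)) → ℤ // BaileySeq k m (m + k - 1) a} : ℕ) : ℤ)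
        = ((2 * m + k - 1).choose m : ℤ) - chooseInt (2 * m + k - 1) ((m : ℤ) - 1) := by
  obtain ⟨j, rfl⟩ : ∃ j, k = j + 1 := ⟨k - 1, by omega⟩
  rw [show m + (j + 1) - 1 = m + j by omega, show 2 * m + (j + 1) - 1 = 2 * m + j by omega]
  have hcard := card_baileySeq_eq_ballotNumber (k := j) (m := m) (n := m + j) (by omega)
  refine ⟨?_, by rw [hcard, ballotNumber_add_self_eq]⟩
  have := mul_ballotNumber_add_self j m
  rw [← hcard] at this
  exact_mod_cast this
end

section
/- Let k ≥ 1 and m ≥ 0. The number of sequences a_1, …, a_{k+2m} with each a_i ∈ {+1, −1} such that every proper partial sum a_1 + ⋯ + a_i (for 1 ≤ i < k+2m) is strictly greater than −k and the total sum a_1 + ⋯ + a_{k+2m} equals −k, is (k/(2m+k)) · C(2m+k, m); that is, (2m+k) times this count equals k · C(2m+k, m). -/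
/-- `a : Fin ℓ → ℤ` is a `±1`-sequence whose proper partial sums (over the first
`i` terms, `1 ≤ i < ℓ`) are all strictly greater than `-k` and whose total sum is
`-k`: an outcome path on which the egg supply is first exhausted at the `ℓ`-th drop. -/
def ExhaustedAtEnd (k : ℕ) {ℓ : ℕ} (a : Fin ℓ → ℤ) : Prop :=
  (∀ i, a i = 1 ∨ a i = -1) ∧
  (∀ i : Fin ℓ, (i : ℕ) + 1 < ℓ → -(k : ℤ) < partialSum a i) ∧
  (∑ i, a i) = -(k : ℤ)

section ConsSplit

variable {α : Type*} {n : ℕ} (P : (Fin (n + 1) → α) → Prop)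

def Fin.consSubtypeEquiv (x : α) :
    {b : Fin n → α // P (Fin.cons x b)} ≃ {a // P a ∧ a 0 = x} where
  toFun b := ⟨Fin.cons x b, b.2, Fin.cons_zero _ _⟩
  invFun a := ⟨Fin.tail a.1, by
    have h := Fin.cons_self_tail a.1
    rw [a.2.2] at h
    exact h ▸ a.2.1⟩
  left_inv b := Subtype.ext (Fin.tail_cons (α := fun _ => α) x b.1)
  right_inv := by rintro ⟨a, ha, rfl⟩; exact Subtype.ext (Fin.cons_self_tail a)

theorem Fin.card_subtype_eq_card_cons_add_card_cons [Finite {a // P a}] {x y : α} (hxy : x ≠ y)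
    (hP : ∀ a, P a → a 0 = x ∨ a 0 = y) :
    Nat.card {a // P a} = Nat.card {b : Fin n → α // P (Fin.cons x b)} +
      Nat.card {b : Fin n → α // P (Fin.cons y b)} := by
  classical
  have hdisj : Disjoint (fun a => P a ∧ a 0 = x) (fun a => P a ∧ a 0 = y) := by
    rw [disjoint_iff_inf_le]
    rintro a ⟨⟨-, hx⟩, -, hy⟩
    exact hxy (hx.symm.trans hy)
  let e : {a // P a} ≃ {b : Fin n → α // P (Fin.cons x b)} ⊕ {b : Fin n → α // P (Fin.cons y b)} :=
    (Equiv.subtypeEquivRight fun a =>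
        ⟨fun h => (hP a h).imp (⟨h, ·⟩) (⟨h, ·⟩), fun h => h.elim And.left And.left⟩).trans <|
      (subtypeOrEquiv _ _ hdisj).trans <|
        Equiv.sumCongr (Fin.consSubtypeEquiv P x).symm (Fin.consSubtypeEquiv P y).symm
  have : Finite (_ ⊕ _) := Finite.of_equiv _ e
  have : Finite {b : Fin n → α // P (Fin.cons x b)} := Finite.sum_left {b // P (Fin.cons y b)}
  have : Finite {b : Fin n → α // P (Fin.cons y b)} := Finite.sum_right {b // P (Fin.cons x b)}
  rw [Nat.card_congr e, Nat.card_sum]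

end ConsSplit

theorem partialSum_cons_zero {ℓ : ℕ} (x : ℤ) (b : Fin ℓ → ℤ) :
    partialSum (Fin.cons x b : Fin (ℓ + 1) → ℤ) 0 = x := by
  simp [partialSum, Finset.sum_filter]

theorem partialSum_cons_succ {ℓ : ℕ} (x : ℤ) (b : Fin ℓ → ℤ) (i : Fin ℓ) :
    partialSum (Fin.cons x b) i.succ = x + partialSum b i := by
  simp [partialSum, Finset.sum_filter, Fin.sum_univ_succ, Fin.succ_le_succ_iff]

theorem exhaustedAtEnd_cons_iff {k k' ℓ : ℕ} {x : ℤ} (b : Fin ℓ → ℤ) (hx : x = 1 ∨ x = -1)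
    (hk : (k' : ℤ) = k + x) (hfirst : -(k : ℤ) < x) :
    ExhaustedAtEnd k (Fin.cons x b) ↔ ExhaustedAtEnd k' b := by
  simp only [ExhaustedAtEnd, Fin.forall_fin_succ, Fin.cons_zero, Fin.cons_succ,
    partialSum_cons_zero, partialSum_cons_succ, Fin.sum_cons, Fin.val_zero, Fin.val_succ]
  constructor
  · rintro ⟨⟨-, h1⟩, ⟨-, h2⟩, h3⟩
    exact ⟨h1, fun i hi => by have := h2 i (by omega); omega, by omega⟩
  · rintro ⟨h1, h2, h3⟩
    exact ⟨⟨hx, h1⟩, ⟨fun _ => hfirst, fun i hi => by have := h2 i (by omega); omega⟩, by omega⟩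

instance (k ℓ : ℕ) : Finite {a : Fin ℓ → ℤ // ExhaustedAtEnd k a} :=
  Set.Finite.to_subtype <|
    (Set.Finite.pi fun _ => (by simp : ({1, -1} : Set ℤ).Finite)).subset fun a ha i _ => ha.1 i

theorem not_exhaustedAtEnd_one_cons_neg_one {ℓ : ℕ} (hℓ : ℓ ≠ 0) (b : Fin ℓ → ℤ) :
    ¬ ExhaustedAtEnd 1 (Fin.cons (-1) b) := fun h => by
  simpa [partialSum_cons_zero] using h.2.1 0 (by simp; omega)

noncomputable def exhaustedCount (k ℓ : ℕ) : ℕ :=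
  Nat.card {a : Fin ℓ → ℤ // ExhaustedAtEnd k a}

theorem exhaustedCount_self (k : ℕ) : exhaustedCount k k = 1 := by
  rw [exhaustedCount, Nat.card_eq_one_iff_exists]
  refine ⟨⟨fun _ => -1, fun _ => Or.inr rfl, fun i hi => ?_, by simp⟩, fun a => ?_⟩
  · rw [partialSum, Finset.filter_ge_eq_Iic, Finset.sum_const, Fin.card_Iic, nsmul_eq_mul]
    push_cast
    omega
  · obtain ⟨a, ha, -, hsum⟩ := a
    have hle : ∀ i ∈ Finset.univ, (-1 : ℤ) ≤ a i := fun i _ => by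
      rcases ha i with h | h <;> simp [h]
    have := (Finset.sum_eq_sum_iff_of_le hle).1 (by simp [hsum])
    exact Subtype.ext (funext fun i => (this i (Finset.mem_univ i)).symm)

theorem exhaustedCount_add_two_succ (k ℓ : ℕ) :
    exhaustedCount (k + 2) (ℓ + 1) = exhaustedCount (k + 1) ℓ + exhaustedCount (k + 3) ℓ := by
  rw [exhaustedCount, Fin.card_subtype_eq_card_cons_add_card_cons _ (by norm_num : (-1 : ℤ) ≠ 1)
    fun a ha => (ha.1 0).symm]
  congr 1 <;> exact Nat.card_congr (Equiv.subtypeEquivRight fun b =>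
    exhaustedAtEnd_cons_iff b (by simp) (by push_cast; ring) (by omega))

theorem exhaustedCount_one_succ {ℓ : ℕ} (hℓ : ℓ ≠ 0) :
    exhaustedCount 1 (ℓ + 1) = exhaustedCount 2 ℓ := by
  rw [exhaustedCount, Fin.card_subtype_eq_card_cons_add_card_cons _ (by norm_num : (1 : ℤ) ≠ -1)
    fun a ha => ha.1 0]
  have hempty : Nat.card {b : Fin ℓ → ℤ // ExhaustedAtEnd 1 (Fin.cons (-1) b)} = 0 :=
    Nat.card_eq_zero.2 (Or.inl ⟨fun b => not_exhaustedAtEnd_one_cons_neg_one hℓ b.1 b.2⟩)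
  rw [hempty, add_zero]
  exact Nat.card_congr (Equiv.subtypeEquivRight fun b =>
    exhaustedAtEnd_cons_iff b (by simp) (by simp) (by simp))

theorem ballot_recurrence_add_two {n j m N₁ N₂ : ℕ} (hn : n = 2 * m + j + 3)
    (h₁ : n * N₁ = (j + 1) * n.choose (m + 1)) (h₂ : n * N₂ = (j + 3) * n.choose m) :
    (n + 1) * (N₁ + N₂) = (j + 2) * (n + 1).choose (m + 1) := by
  have e₁ := Nat.add_one_mul_choose_eq n m
  have e₂ := Nat.choose_mul_succ_eq n (m + 1)
  rw [show n + 1 - (m + 1) = m + j + 3 by omega] at e₂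
  refine Nat.eq_of_mul_eq_mul_left (show 0 < n by omega) ?_
  subst hn
  zify at h₁ h₂ e₁ e₂ ⊢
  linear_combination (2 * (m : ℤ) + j + 4) * (h₁ + h₂) + ((j : ℤ) + 1) * e₂ + ((j : ℤ) + 3) * e₁

theorem ballot_recurrence_one {n m N : ℕ} (hn : n = 2 * m + 2) (h : n * N = 2 * n.choose m) :
    (n + 1) * N = (n + 1).choose (m + 1) := by
  have e := Nat.add_one_mul_choose_eq n m
  have h' : (m + 1) * N = n.choose m := by subst hn; linarith
  refine Nat.eq_of_mul_eq_mul_left (show 0 < m + 1 by omega) ?_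
  zify at h' e ⊢
  linear_combination ((n : ℤ) + 1) * h' + e

theorem mul_exhaustedCount_eq {ℓ k m : ℕ} (hk : 1 ≤ k) (hℓ : ℓ = k + 2 * m) :
    ℓ * exhaustedCount k ℓ = k * ℓ.choose m := by
  induction ℓ generalizing k m with
  | zero => omega
  | succ ℓ ih =>
    rcases m with _ | m
    · obtain rfl : k = ℓ + 1 := by omega
      simp [exhaustedCount_self]
    rcases k with _ | _ | j
    · omega
    · rw [exhaustedCount_one_succ (by omega)]
      simpa using ballot_recurrence_one (by omega) (ih (k := 2) (m := m) (by omega) (by omega))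
    · rw [exhaustedCount_add_two_succ]
      exact ballot_recurrence_add_two (by omega)
        (ih (k := j + 1) (m := m + 1) (by omega) (by omega))
        (ih (k := j + 3) (m := m) (by omega) (by omega))

/-- the number of `±1`-sequences of length `k + 2m` whose proper
partial sums all exceed `-k` and whose total sum is `-k` satisfies
`(2m+k) ⬝ count = k ⬝ C(2m+k, m)`, i.e. the count is `(k/(2m+k)) C(2m+k, m)`. -/
theorem first_exhaustion_count (k : ℕ) (hk : 1 ≤ k) (m : ℕ) :
    (2 * m + k) * Nat.card {a : Fin (k + 2 * m) → ℤ // ExhaustedAtEnd k a}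
      = k * (2 * m + k).choose m := by
  rw [add_comm (2 * m)]
  exact mul_exhaustedCount_eq hk rfl
end

section
/- Let 1 ≤ k ≤ d and set α = ⌊(d−k)/2⌋. The number Z_k(d) of ±1-sequences of some length ℓ with k ≤ ℓ ≤ d such that every proper partial sum (over the first i terms, 1 ≤ i < ℓ) is strictly greater than −k and the total sum equals −k, is Z_k(d) = ∑_{m=0}^{α} (k/(2m+k)) · C(2m+k, m) = ∑_{m=0}^{α} ( C(2m+k−1, m) − C(2m+k−1, m−1) ). (Such a sequence necessarily has length ℓ = k + 2m for some 0 ≤ m ≤ α.) -/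
/-!
Conditioning on the first step, a path exhausting `k + 1` eggs is either `+1` followed by a path
exhausting `k + 2` eggs, or `-1` followed by a path exhausting `k` eggs (only the empty path when
`k = 0`). So the number of such paths of length `2m + k + 1` satisfies the Pascal-type recursion of
the ballot numbers `C(n, m) - C(n, m - 1)`, `n = 2m + k`, and agrees with them; finally
`C(n, m) - C(n, m - 1) = (k + 1) / (n + 1) * C(n + 1, m)`.
-/

def IsExhaustingPath (h : ℤ) (l : List ℤ) : Prop :=
  (∀ x ∈ l, x = 1 ∨ x = -1) ∧
  (∀ i, i + 1 < l.length → -h < (l.take (i + 1)).sum) ∧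
  l.sum = -h

lemma partialSum_eq_sum_take_ofFn {n : ℕ} (a : Fin n → ℤ) (i : Fin n) :
    partialSum a i = ((List.ofFn a).take (i + 1)).sum := by
  rw [List.sum_take_ofFn, partialSum]
  exact Finset.sum_congr (Finset.filter_congr fun j _ => Nat.lt_succ_iff.symm) fun _ _ => rfl

lemma exhaustedAtEnd_iff_isExhaustingPath_ofFn (k : ℕ) {ℓ : ℕ} (a : Fin ℓ → ℤ) :
    ExhaustedAtEnd k a ↔ IsExhaustingPath k (List.ofFn a) := by
  simp only [ExhaustedAtEnd, IsExhaustingPath, List.forall_mem_ofFn_iff, List.length_ofFn,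
    List.sum_ofFn, partialSum_eq_sum_take_ofFn]
  refine and_congr_right fun _ => and_congr_left fun _ => ⟨fun h i hi => h ⟨i, by omega⟩ hi,
    fun h i hi => h i hi⟩

lemma isExhaustingPath_nil_iff {h : ℤ} : IsExhaustingPath h [] ↔ h = 0 := by
  simp [IsExhaustingPath, eq_comm]

lemma isExhaustingPath_cons_iff {h x : ℤ} {t : List ℤ} :
    IsExhaustingPath h (x :: t) ↔
      (x = 1 ∨ x = -1) ∧ (t ≠ [] → -h < x) ∧ IsExhaustingPath (h + x) t := by
  simp only [IsExhaustingPath, List.forall_mem_cons, List.length_cons, List.sum_cons,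
    List.take_succ_cons]
  constructor
  · rintro ⟨⟨hx, ht⟩, hpre, hsum⟩
    refine ⟨hx, fun hne => ?_, ht, fun i hi => ?_, by omega⟩
    · simpa using hpre 0 (by simpa [List.length_pos_iff] using hne)
    · have := hpre (i + 1) (by omega)
      omega
  · rintro ⟨hx, hhead, ht, hpre, hsum⟩
    refine ⟨⟨hx, ht⟩, fun i hi => ?_, by omega⟩
    rcases i with _ | i
    · simpa using hhead (List.ne_nil_of_length_pos (by omega))
    · have := hpre i (by omega)
      omega

/-- Outcome paths of `n` drops starting with `k` eggs that end exactly when the eggs run out.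
With `0` eggs only the empty path qualifies, whereas `ExhaustedAtEnd 0` also holds for `[1, -1]`;
this is why `mem_exhaustingPaths` is stated for `k + 1` eggs. -/
def exhaustingPaths : ℕ → ℕ → Finset (List ℤ)
  | 0, 0 => {[]}
  | 0, _ + 1 => ∅
  | _ + 1, 0 => ∅
  | k + 1, n + 1 =>
      (exhaustingPaths (k + 2) n).map ⟨List.cons 1, List.cons_injective⟩ ∪
        (exhaustingPaths k n).map ⟨List.cons (-1), List.cons_injective⟩

lemma exists_eq_add_two_mul_of_mem_exhaustingPaths {k n : ℕ} {l : List ℤ}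
    (hl : l ∈ exhaustingPaths k n) : ∃ m, n = k + 2 * m := by
  induction n generalizing k l with
  | zero => rcases k with _ | k <;> simp_all [exhaustingPaths]
  | succ n ih =>
    rcases k with _ | k
    · simp [exhaustingPaths] at hl
    · simp only [exhaustingPaths, Finset.mem_union, Finset.mem_map,
        Function.Embedding.coeFn_mk] at hl
      rcases hl with ⟨t, ht, -⟩ | ⟨t, ht, -⟩
      · obtain ⟨m, rfl⟩ := ih ht
        exact ⟨m + 1, by ring⟩
      · obtain ⟨m, rfl⟩ := ih ht
        exact ⟨m, by ring⟩

lemma mem_exhaustingPaths_zero {n : ℕ} {l : List ℤ} :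
    l ∈ exhaustingPaths 0 n ↔ l = [] ∧ n = 0 := by
  rcases n with _ | n <;> simp [exhaustingPaths]

lemma mem_exhaustingPaths {k n : ℕ} {l : List ℤ} :
    l ∈ exhaustingPaths (k + 1) n ↔ l.length = n ∧ IsExhaustingPath (k + 1) l := by
  induction n generalizing k l with
  | zero =>
    simp only [exhaustingPaths, Finset.notMem_empty, false_iff, not_and, List.length_eq_zero_iff]
    rintro rfl
    rw [isExhaustingPath_nil_iff]
    omega
  | succ n ih =>
    rcases l with _ | ⟨x, t⟩
    · simp [exhaustingPaths]
    simp only [exhaustingPaths, Finset.mem_union, Finset.mem_map, Function.Embedding.coeFn_mk,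
      List.cons.injEq, List.length_cons, Nat.add_right_cancel_iff, isExhaustingPath_cons_iff]
    constructor
    · rintro (⟨t, ht, rfl, rfl⟩ | ⟨t, ht, rfl, rfl⟩)
      · obtain ⟨hlen, hpath⟩ := ih.1 ht
        exact ⟨hlen, by norm_num, fun _ => by omega, by push_cast at hpath; simpa using hpath⟩
      · rcases k with _ | k
        · obtain ⟨rfl, rfl⟩ := mem_exhaustingPaths_zero.1 ht
          simp [isExhaustingPath_nil_iff]
        · obtain ⟨hlen, hpath⟩ := ih.1 ht
          exact ⟨hlen, by norm_num, fun _ => by omega, by push_cast at hpath ⊢; simpa using hpath⟩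
    · rintro ⟨hlen, rfl | rfl, hhead, hpath⟩
      · refine Or.inl ⟨t, ih.2 ⟨hlen, ?_⟩, rfl, rfl⟩
        push_cast
        simpa using hpath
      · refine Or.inr ⟨t, ?_, rfl, rfl⟩
        rcases k with _ | k
        · have ht : t = [] := by
            by_contra hne
            have := hhead hne
            omega
          exact mem_exhaustingPaths_zero.2 ⟨ht, by simp [← hlen, ht]⟩
        · refine ih.2 ⟨hlen, ?_⟩
          push_cast at hpath ⊢
          simpa using hpath

lemma card_exhaustingPaths_succ_succ (k n : ℕ) :
    (exhaustingPaths (k + 1) (n + 1)).card =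
      (exhaustingPaths (k + 1 + 1) n).card + (exhaustingPaths k n).card := by
  rw [exhaustingPaths, Finset.card_union_of_disjoint, Finset.card_map, Finset.card_map]
  simp [Finset.disjoint_left]

lemma chooseInt_natCast (n m : ℕ) : chooseInt n m = n.choose m := by
  simp [chooseInt]

lemma chooseInt_succ_succ (n : ℕ) (j : ℤ) :
    chooseInt (n + 1) (j + 1) = chooseInt n j + chooseInt n (j + 1) := by
  rcases le_or_gt 0 j with hj | hj
  · lift j to ℕ using hj
    rw [← Nat.cast_succ, chooseInt_natCast, chooseInt_natCast, chooseInt_natCast,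
      Nat.choose_succ_succ, Nat.cast_add]
  · rcases (show j = -1 ∨ j < -1 by omega) with rfl | hj'
    · simp [chooseInt]
    · simp [chooseInt, show ¬0 ≤ j by omega, show ¬0 ≤ j + 1 by omega]

lemma exhaustingPaths_eq_empty {k n : ℕ} (h : ∀ m, n ≠ k + 2 * m) : exhaustingPaths k n = ∅ :=
  Finset.eq_empty_of_forall_notMem fun _ hl =>
    (exists_eq_add_two_mul_of_mem_exhaustingPaths hl).elim h

def ballot (n : ℕ) (m : ℤ) : ℤ := chooseInt n m - chooseInt n (m - 1)

lemma ballot_succ_succ (n : ℕ) (m : ℤ) :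
    ballot (n + 1) (m + 1) = ballot n m + ballot n (m + 1) := by
  have h := chooseInt_succ_succ n (m - 1)
  rw [sub_add_cancel] at h
  rw [ballot, ballot, ballot, add_sub_cancel_right, chooseInt_succ_succ, h]
  ring

theorem card_exhaustingPaths {n k m : ℕ} (h : n = 2 * m + k) :
    ((exhaustingPaths (k + 1) (n + 1)).card : ℤ) = ballot n m := by
  induction n generalizing k m with
  | zero =>
    obtain ⟨rfl, rfl⟩ : k = 0 ∧ m = 0 := by omega
    rfl
  | succ n ih =>
    rw [card_exhaustingPaths_succ_succ, Nat.cast_add]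
    rcases m with _ | m
    · obtain ⟨k, rfl⟩ : ∃ k', k = k' + 1 := ⟨n, by omega⟩
      rw [exhaustingPaths_eq_empty fun _ => by omega, ih (k := k) (m := 0) (by omega)]
      simp [ballot, chooseInt]
    rw [Nat.cast_add_one, ballot_succ_succ]
    rcases k with _ | k
    · have h0 : exhaustingPaths 0 (n + 1) = ∅ := rfl
      obtain rfl : n = 2 * m + 1 := by omega
      have hsymm : ballot (2 * m + 1) (m + 1) = 0 := by
        rw [ballot, add_sub_cancel_right, ← Nat.cast_add_one, chooseInt_natCast, chooseInt_natCast,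
          Nat.choose_symm_half, sub_self]
      rw [ih (k := 0 + 1) (m := m) (by omega), h0, hsymm, Finset.card_empty, Nat.cast_zero]
    · rw [ih (k := k + 1 + 1) (m := m) (by omega), ih (k := k) (m := m + 1) (by omega),
        Nat.cast_add_one]

lemma ballot_eq_div_mul_choose (k m : ℕ) :
    (ballot (2 * m + k) m : ℚ) = (k + 1) / (2 * m + k + 1) * (2 * m + k + 1).choose m := by
  rcases m with _ | j
  · have hk : (k : ℚ) + 1 ≠ 0 := by positivity
    simp [ballot, chooseInt, hk]
  · set N := 2 * (j + 1) + k
    have hN : ((N + 1) * N.choose j : ℚ) = (N + 1).choose (j + 1) * (j + 1) := by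
      exact_mod_cast Nat.add_one_mul_choose_eq N j
    have hsucc : (N.choose (j + 1) * (j + 1) : ℚ) = N.choose j * (j + k + 2) := by
      have h := Nat.choose_succ_right_eq N j
      rw [show N - j = j + k + 2 by omega] at h
      exact_mod_cast h
    rw [ballot, Nat.cast_add_one, add_sub_cancel_right, ← Nat.cast_add_one, chooseInt_natCast,
      chooseInt_natCast, div_mul_eq_mul_div, eq_div_iff (by positivity)]
    apply mul_right_cancel₀ (show (j : ℚ) + 1 ≠ 0 by positivity)
    push_cast [N] at hN hsucc ⊢
    linear_combination (2 * (j : ℚ) + k + 3) * hsucc + (k + 1) * hN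

lemma sum_Icc_eq_sum_range_add_two_mul {M : Type*} [AddCommMonoid M] {f : ℕ → M} {k d : ℕ}
    (hkd : k ≤ d) (hf : ∀ n, (∀ m, n ≠ k + 2 * m) → f n = 0) :
    ∑ n ∈ Finset.Icc k d, f n = ∑ m ∈ Finset.range ((d - k) / 2 + 1), f (k + 2 * m) := by
  rw [← Finset.sum_image (g := fun m => k + 2 * m) fun _ _ _ _ h => by simpa using h]
  refine (Finset.sum_subset (fun n hn => ?_) fun n hn hn' => hf n fun m hm => hn' ?_).symm
  · obtain ⟨m, hm, rfl⟩ := Finset.mem_image.1 hn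
    simp only [Finset.mem_range] at hm
    simp only [Finset.mem_Icc]
    omega
  · simp only [Finset.mem_Icc] at hn
    exact Finset.mem_image.2 ⟨m, Finset.mem_range.2 (by omega), hm.symm⟩

lemma natCard_exhaustedAtEnd_eq_sum (k d : ℕ) :
    Nat.card {p : Σ ℓ : ℕ, Fin ℓ → ℤ // k + 1 ≤ p.1 ∧ p.1 ≤ d ∧ ExhaustedAtEnd (k + 1) p.2} =
      ∑ n ∈ Finset.Icc (k + 1) d, (exhaustingPaths (k + 1) n).card := by
  have hequiv : {p : Σ ℓ : ℕ, Fin ℓ → ℤ // k + 1 ≤ p.1 ∧ p.1 ≤ d ∧ ExhaustedAtEnd (k + 1) p.2} ≃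
      ((Finset.Icc (k + 1) d).biUnion (exhaustingPaths (k + 1)) : Set (List ℤ)) :=
    List.equivSigmaTuple.symm.subtypeEquiv fun p => by
      simp [List.equivSigmaTuple, mem_exhaustingPaths, exhaustedAtEnd_iff_isExhaustingPath_ofFn,
        and_assoc]
  rw [Nat.card_congr hequiv, Nat.card_coe_set_eq, Set.ncard_coe_finset, Finset.card_biUnion]
  intro n₁ _ n₂ _ hne
  exact Finset.disjoint_left.2 fun l h₁ h₂ =>
    hne ((mem_exhaustingPaths.1 h₁).1.symm.trans (mem_exhaustingPaths.1 h₂).1)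

/-- with `α = ⌊(d-k)/2⌋`, the number `Z_k(d)` of `±1`-sequences of
some length `ℓ` with `k ≤ ℓ ≤ d`, proper partial sums `> -k` and total sum `-k`
equals `∑_{m=0}^{α} (k/(2m+k)) C(2m+k, m) = ∑_{m=0}^{α} (C(2m+k-1, m) - C(2m+k-1, m-1))`. -/
theorem bonus_eggs_exhausted_count (k d : ℕ) (hk : 1 ≤ k) (hkd : k ≤ d) :
    ((Nat.card {p : Σ ℓ : ℕ, Fin ℓ → ℤ //
          k ≤ p.1 ∧ p.1 ≤ d ∧ ExhaustedAtEnd k p.2} : ℕ) : ℚ)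
        = ∑ m ∈ Finset.range ((d - k) / 2 + 1),
            (k : ℚ) / (2 * m + k) * ((2 * m + k).choose m : ℚ) ∧
    ((Nat.card {p : Σ ℓ : ℕ, Fin ℓ → ℤ //
          k ≤ p.1 ∧ p.1 ≤ d ∧ ExhaustedAtEnd k p.2} : ℕ) : ℤ)
        = ∑ m ∈ Finset.range ((d - k) / 2 + 1),
            (((2 * m + k - 1).choose m : ℤ) - chooseInt (2 * m + k - 1) ((m : ℤ) - 1)) := by
  obtain ⟨k, rfl⟩ : ∃ k', k = k' + 1 := ⟨k - 1, by omega⟩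
  have hZ : ((Nat.card {p : Σ ℓ : ℕ, Fin ℓ → ℤ //
      k + 1 ≤ p.1 ∧ p.1 ≤ d ∧ ExhaustedAtEnd (k + 1) p.2} : ℕ) : ℤ) =
      ∑ m ∈ Finset.range ((d - (k + 1)) / 2 + 1), ballot (2 * m + k) m := by
    rw [natCard_exhaustedAtEnd_eq_sum, Nat.cast_sum,
      sum_Icc_eq_sum_range_add_two_mul hkd fun n hn => by simp [exhaustingPaths_eq_empty hn]]
    refine Finset.sum_congr rfl fun m _ => ?_
    rw [show k + 1 + 2 * m = 2 * m + k + 1 by ring]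
    exact card_exhaustingPaths rfl
  constructor
  · rw [← Int.cast_natCast, hZ, Int.cast_sum]
    refine Finset.sum_congr rfl fun m _ => ?_
    rw [ballot_eq_div_mul_choose]
    push_cast
    ring_nf
  · rw [hZ]
    refine Finset.sum_congr rfl fun m _ => ?_
    rw [show 2 * m + (k + 1) - 1 = 2 * m + k by omega, ballot, chooseInt_natCast]
end

section
/- Let 1 ≤ k ≤ d and set β = ⌊(d−k+1)/2⌋. The number M_k(d) of ±1-sequences of length d all of whose partial sums a_1 + ⋯ + a_i (for 1 ≤ i ≤ d) are strictly greater than −k equals ∑_{n=β}^{β+k−1} C(d, n). -/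
def Good (k d : ℕ) : Type :=
  {a : Fin d → ℤ //
    (∀ i, a i = 1 ∨ a i = -1) ∧ ∀ i : Fin d, -(k : ℤ) < partialSum a i}

lemma psum_zero {d : ℕ} (a : Fin (d+1) → ℤ) : partialSum a 0 = a 0 := by
  unfold partialSum
  rw [Finset.sum_filter, Fin.sum_univ_succ]
  simp [Fin.le_zero_iff, Fin.succ_ne_zero]

lemma psum_succ {d : ℕ} (a : Fin (d+1) → ℤ) (i : Fin d) :
    partialSum a i.succ = a 0 + partialSum (fun j => a j.succ) i := by
  unfold partialSum
  rw [Finset.sum_filter, Finset.sum_filter, Fin.sum_univ_succ]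
  simp [Fin.succ_le_succ_iff, Fin.zero_le]

lemma psum_tail {d : ℕ} (a : Fin (d+1) → ℤ) (i : Fin d) :
    partialSum (fun j => a j.succ) i = partialSum a i.succ - a 0 := by
  rw [psum_succ]; ring

instance goodFinite (k d : ℕ) : Finite (Good k d) := by
  apply Finite.of_injective (fun a : Good k d => (fun i => decide (a.1 i = 1) : Fin d → Bool))
  intro a b h
  apply Subtype.ext; funext i
  have hi := congrFun h i
  rcases a.2.1 i with ha | ha <;> rcases b.2.1 i with hb | hb <;>
    simp [ha, hb] at hi ⊢

noncomputable def f (k d : ℕ) : ℕ := Nat.card (Good k d)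

lemma f_zero (k : ℕ) : f k 0 = 1 := by
  have e : Good k 0 ≃ PUnit.{1} := by
    refine ⟨fun _ => PUnit.unit, fun _ => ⟨fun i => i.elim0, fun i => i.elim0, fun i => i.elim0⟩,
      ?_, fun _ => rfl⟩
    intro a; apply Subtype.ext; funext i; exact i.elim0
  rw [f, Nat.card_congr e]; simp

def eA (k d : ℕ) : Good (k+1) d ≃ {a : Good k (d+1) // a.1 0 = 1} where
  toFun b := ⟨⟨Fin.cons 1 b.1, by
      intro i
      refine Fin.cases ?_ ?_ i
      · left; simp
      · intro j; simpa using b.2.1 j,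
    by
      rw [Fin.forall_fin_succ]
      constructor
      · rw [psum_zero]
        simp only [Fin.cons_zero]
        have : (0:ℤ) ≤ (k:ℤ) := Int.natCast_nonneg k
        linarith
      · intro j
        rw [psum_succ]
        simp only [Fin.cons_succ, Fin.cons_zero]
        have hb := b.2.2 j
        push_cast at hb ⊢
        linarith⟩,
    by simp⟩
  invFun a := ⟨fun i => a.1.1 i.succ, fun i => a.1.2.1 i.succ, by
    intro i
    rw [psum_tail, a.2]
    have := a.1.2.2 i.succ
    push_cast at this ⊢
    linarith⟩
  left_inv b := Subtype.ext (funext fun i => by simp)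
  right_inv a := by
    apply Subtype.ext
    apply Subtype.ext
    funext i
    refine Fin.cases ?_ ?_ i
    · simpa using a.2.symm
    · intro j; simp

lemma neg_one_of_not_one {k d : ℕ} (a : Good k d) (i : Fin d) (h : ¬ a.1 i = 1) :
    a.1 i = -1 := by
  rcases a.2.1 i with h1 | h1
  · exact absurd h1 h
  · exact h1

def eB (k d : ℕ) : Good (k+1) d ≃ {a : Good (k+2) (d+1) // ¬ a.1 0 = 1} where
  toFun b := ⟨⟨Fin.cons (-1) b.1, by
      intro i
      refine Fin.cases ?_ ?_ i
      · right; simp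
      · intro j; simpa using b.2.1 j,
    by
      rw [Fin.forall_fin_succ]
      constructor
      · rw [psum_zero]
        simp only [Fin.cons_zero]
        have : (0:ℤ) ≤ (k:ℤ) := Int.natCast_nonneg k
        push_cast
        linarith
      · intro j
        rw [psum_succ]
        simp only [Fin.cons_succ, Fin.cons_zero]
        have hb := b.2.2 j
        push_cast at hb ⊢
        linarith⟩,
    by simp⟩
  invFun a := ⟨fun i => a.1.1 i.succ, fun i => a.1.2.1 i.succ, by
    intro i
    rw [psum_tail, neg_one_of_not_one a.1 0 a.2]
    have := a.1.2.2 i.succ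
    push_cast at this ⊢
    linarith⟩
  left_inv b := Subtype.ext (funext fun i => by simp)
  right_inv a := by
    apply Subtype.ext
    apply Subtype.ext
    funext i
    refine Fin.cases ?_ ?_ i
    · simpa using (neg_one_of_not_one a.1 0 a.2).symm
    · intro j; simp

noncomputable instance instFintypeGood (k d : ℕ) : Fintype (Good k d) :=
  Fintype.ofFinite _

lemma f_succ (k d : ℕ) : f (k+2) (d+1) = f (k+3) d + f (k+1) d := by
  have hsplit : f (k+2) (d+1) =
      Nat.card {a : Good (k+2) (d+1) // a.1 0 = 1} +
      Nat.card {a : Good (k+2) (d+1) // ¬ a.1 0 = 1} := by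
    rw [f, ← Nat.card_congr (Equiv.sumCompl (fun a : Good (k+2) (d+1) => a.1 0 = 1)),
      Nat.card_sum]
  rw [hsplit, f, f, Nat.card_congr (eA (k+2) d), Nat.card_congr (eB k d)]

lemma f_one (d : ℕ) : f 1 (d+1) = f 2 d := by
  have hall : ∀ a : Good 1 (d+1), a.1 0 = 1 := by
    intro a
    rcases a.2.1 0 with h | h
    · exact h
    · have := a.2.2 0
      rw [psum_zero, h] at this
      norm_num at this
  rw [f, f, Nat.card_congr (eA 1 d)]
  exact Nat.card_congr (Equiv.subtypeUnivEquiv hall).symm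

noncomputable def g (k d : ℕ) : ℕ :=
  ∑ n ∈ Finset.Icc ((d - k + 1) / 2) ((d - k + 1) / 2 + k - 1), d.choose n

lemma sum_Icc_choose (d m : ℕ) (h : d ≤ m) :
    ∑ n ∈ Finset.Icc 0 m, d.choose n = 2 ^ d := by
  rw [← Finset.Ico_add_one_right_eq_Icc, ← Finset.range_eq_Ico]
  have h2 : ∑ n ∈ Finset.range (m+1), d.choose n
      = ∑ n ∈ Finset.range (d+1), d.choose n := by
    refine (Finset.sum_subset (Finset.range_subset_range.2 (by omega)) ?_).symm
    intro x _ hx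
    rw [Finset.mem_range] at hx
    exact Nat.choose_eq_zero_of_lt (by omega)
  rw [h2, Nat.sum_range_choose]

lemma sum_Icc_choose_top (m : ℕ) :
    ∑ n ∈ Finset.Icc 0 m, (m+1).choose n = 2 ^ (m+1) - 1 := by
  have h1 := sum_Icc_choose (m+1) (m+1) le_rfl
  rw [Finset.sum_Icc_succ_top (by omega)] at h1
  rw [Nat.choose_self] at h1
  omega

lemma key (d t c : ℕ) :
    ∑ n ∈ Finset.Icc (t+1) (t+c+1), (d+1).choose n
      = ∑ n ∈ Finset.Icc t (t+c+1), d.choose n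
        + ∑ n ∈ Finset.Icc (t+1) (t+c), d.choose n := by
  have hmap : Finset.Icc (t+1) (t+c+1)
      = (Finset.Icc t (t+c)).map (addRightEmbedding 1) := by
    rw [Finset.map_add_right_Icc]
  have hL : ∑ n ∈ Finset.Icc (t+1) (t+c+1), (d+1).choose n
      = ∑ n ∈ Finset.Icc t (t+c), d.choose n
        + ∑ n ∈ Finset.Icc t (t+c), d.choose (n+1) := by
    rw [hmap, Finset.sum_map]
    rw [← Finset.sum_add_distrib]
    refine Finset.sum_congr rfl ?_
    intro n _
    simp [addRightEmbedding, Nat.choose_succ_succ]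
  have hback : ∑ n ∈ Finset.Icc t (t+c), d.choose (n+1)
      = ∑ n ∈ Finset.Icc (t+1) (t+c+1), d.choose n := by
    rw [hmap, Finset.sum_map]
    refine Finset.sum_congr rfl ?_
    intro n _
    simp [addRightEmbedding]
  have e1 : ∑ n ∈ Finset.Icc t (t+c+1), d.choose n
      = ∑ n ∈ Finset.Icc t (t+c), d.choose n + d.choose (t+c+1) :=
    Finset.sum_Icc_succ_top (by omega) _
  have e2 : ∑ n ∈ Finset.Icc (t+1) (t+c+1), d.choose n
      = ∑ n ∈ Finset.Icc (t+1) (t+c), d.choose n + d.choose (t+c+1) :=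
    Finset.sum_Icc_succ_top (by omega) _
  omega

lemma g_zero (k : ℕ) (hk : 1 ≤ k) : g k 0 = 1 := by
  unfold g
  have hβ : (0 - k + 1) / 2 = 0 := by omega
  rw [hβ]
  rw [Finset.sum_eq_single_of_mem 0 (by simp)]
  · simp
  · intro n _ hn
    exact Nat.choose_eq_zero_of_lt (by omega)

lemma g_one (d : ℕ) : g 1 (d+1) = g 2 d := by
  rcases d with _ | d
  · unfold g; norm_num; decide
  · unfold g
    have hβ : (d + 1 + 1 - 1 + 1) / 2 = d / 2 + 1 := by omega
    have hb : (d + 1 - 2 + 1) / 2 = d / 2 := by omega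
    rw [hβ, hb]
    have h1 : d / 2 + 1 + 1 - 1 = d / 2 + 1 := by omega
    have h2 : d / 2 + 2 - 1 = d / 2 + 1 := by omega
    simp only [h1, h2]
    rw [Finset.Icc_self, Finset.sum_singleton]
    rw [Finset.sum_Icc_succ_top (by omega), Finset.Icc_self, Finset.sum_singleton]
    exact Nat.choose_succ_succ _ _

lemma g_succ (k d : ℕ) : g (k+2) (d+1) = g (k+3) d + g (k+1) d := by
  rcases le_or_gt (k+2) d with h | h
  · unfold g
    have a1 : (d + 1 - (k+2) + 1) / 2 = (d - (k+2))/2 + 1 := by omega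
    have a3 : (d - (k+3) + 1) / 2 = (d - (k+2))/2 := by omega
    have a5 : (d - (k+1) + 1) / 2 = (d - (k+2))/2 + 1 := by omega
    rw [a1, a3, a5]
    have a2 : (d - (k+2))/2 + 1 + (k+2) - 1 = (d - (k+2))/2 + (k+1) + 1 := by omega
    have a4 : (d - (k+2))/2 + (k+3) - 1 = (d - (k+2))/2 + (k+1) + 1 := by omega
    have a6 : (d - (k+2))/2 + 1 + (k+1) - 1 = (d - (k+2))/2 + (k+1) := by omega
    rw [a2, a4, a6]
    exact key d ((d - (k+2))/2) (k+1)
  · rcases Nat.lt_or_ge d (k+1) with hd | hd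
    · -- d ≤ k
      unfold g
      have a1 : (d + 1 - (k+2) + 1) / 2 = 0 := by omega
      have a3 : (d - (k+3) + 1) / 2 = 0 := by omega
      have a5 : (d - (k+1) + 1) / 2 = 0 := by omega
      rw [a1, a3, a5]
      have a2 : 0 + (k+2) - 1 = k+1 := by omega
      have a4 : 0 + (k+3) - 1 = k+2 := by omega
      have a6 : 0 + (k+1) - 1 = k := by omega
      rw [a2, a4, a6]
      rw [sum_Icc_choose (d+1) (k+1) (by omega), sum_Icc_choose d (k+2) (by omega),
        sum_Icc_choose d k (by omega)]
      ring
    · -- d = k+1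
      have hdk : d = k + 1 := by omega
      subst hdk
      unfold g
      have a1 : (k + 1 + 1 - (k+2) + 1) / 2 = 0 := by omega
      have a3 : (k + 1 - (k+3) + 1) / 2 = 0 := by omega
      have a5 : (k + 1 - (k+1) + 1) / 2 = 0 := by omega
      rw [a1, a3, a5]
      have a2 : 0 + (k+2) - 1 = k+1 := by omega
      have a4 : 0 + (k+3) - 1 = k+2 := by omega
      have a6 : 0 + (k+1) - 1 = k := by omega
      rw [a2, a4, a6]
      rw [sum_Icc_choose (k+1) (k+2) (by omega)]
      have h1 := sum_Icc_choose_top (k+1)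
      have h2 := sum_Icc_choose_top k
      have hp : (2:ℕ)^(k+2) = 2^(k+1) + 2^(k+1) := by ring
      have hq : (1:ℕ) ≤ 2^(k+1) := Nat.one_le_two_pow
      omega

lemma f_eq_g : ∀ d k, 1 ≤ k → f k d = g k d := by
  intro d
  induction d with
  | zero => intro k hk; rw [f_zero, g_zero k hk]
  | succ d ih =>
    intro k hk
    match k with
    | 1 => rw [f_one, ih 2 (by omega), g_one]
    | (k+2) => rw [f_succ, ih (k+3) (by omega), ih (k+1) (by omega), g_succ]

/-- with `β = ⌊(d-k+1)/2⌋`, the number `M_k(d)` of `±1`-sequences of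
length `d` all of whose partial sums exceed `-k` equals `∑_{n=β}^{β+k-1} C(d, n)`. -/
theorem bonus_eggs_surviving_count (k d : ℕ) (hk : 1 ≤ k) (hkd : k ≤ d) :
    Nat.card {a : Fin d → ℤ //
        (∀ i, a i = 1 ∨ a i = -1) ∧ ∀ i : Fin d, -(k : ℤ) < partialSum a i}
      = ∑ n ∈ Finset.Icc ((d - k + 1) / 2) ((d - k + 1) / 2 + k - 1), d.choose n := by
  exact f_eq_g d k hk
end
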